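/- arXiv:2207.12523 — 4 statements merged into one kernel-verified Lean document; each statement's English description precedes it below -/
import Mathlib

section
/- A finite irreflexive oriented graph G has an iot-injective homomorphism to the reflexive tournament T_2^r if and only if each connected component D of G satisfies one of the following: (a) D is an oriented path on at most four vertices; (b) D is an oriented path with an alternating matching; (c) D is an oriented cycle on 4k vertices for some k ≥ 1 with an alternating matching. -/
/-- A homomorphism of directed graphs (given as binary relations). -/
def IsHom {A : Type} {B : Type} (R : A → A → Prop) (S : B → B → Prop) (f : A → B) : Prop :=
  ∀ x y, R x y → S (f x) (f y)

/-- ios-injectivity: injective on in-neighbourhoods and on out-neighbourhoods separately. -/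
def IosInj {A : Type} {B : Type} (R : A → A → Prop) (f : A → B) : Prop :=
  ∀ x : A, Set.InjOn f {y | R y x} ∧ Set.InjOn f {y | R x y}

/-- iot-injectivity: injective on the union of in- and out-neighbourhoods. -/
def IotInj {A : Type} {B : Type} (R : A → A → Prop) (f : A → B) : Prop :=
  ∀ x : A, Set.InjOn f ({y | R y x} ∪ {y | R x y})

/-- An oriented graph: between two distinct vertices at most one arc. -/
def IsOriented {A : Type} (R : A → A → Prop) : Prop :=
  ∀ x y, x ≠ y → ¬(R x y ∧ R y x)

/-- Irreflexive (no loops). -/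
def NoLoops {A : Type} (R : A → A → Prop) : Prop := ∀ x, ¬ R x x

/-- `R` is (isomorphic to) a subgraph of `S`: an injective arc-preserving map. -/
def Subg {A : Type} {B : Type} (R : A → A → Prop) (S : B → B → Prop) : Prop :=
  ∃ g : A → B, Function.Injective g ∧ IsHom R S g

/-- There exists an ios-injective homomorphism of `R` to `S`. -/
def IosHomEx {A : Type} {B : Type} (R : A → A → Prop) (S : B → B → Prop) : Prop :=
  ∃ g : A → B, IsHom R S g ∧ IosInj R g

/-- There exists an iot-injective homomorphism of `R` to `S`. -/
def IotHomEx {A : Type} {B : Type} (R : A → A → Prop) (S : B → B → Prop) : Prop :=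
  ∃ g : A → B, IsHom R S g ∧ IotInj R g

/-- Converse (all arcs reversed). -/
def convRel {A : Type} (R : A → A → Prop) : A → A → Prop := fun x y => R y x

/-- Transitive tournament `T_n`. -/
def TTrel (n : ℕ) : Fin n → Fin n → Prop := fun i j => i < j

/-- Reflexive transitive tournament `T_2^r`. -/
def T2r : Fin 2 → Fin 2 → Prop := fun i j => i ≤ j

/-- Reflexive one-vertex tournament `T_1^r`. -/
def T1r : PUnit → PUnit → Prop := fun _ _ => True

/-- Directed path `P_N` on `N` vertices. -/
def DPathRel (N : ℕ) : Fin N → Fin N → Prop := fun x y => (y : ℕ) = (x : ℕ) + 1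

/-- Directed cycle `C_m` on `m` vertices. -/
def DCycRel (m : ℕ) : Fin m → Fin m → Prop := fun x y => (y : ℕ) = ((x : ℕ) + 1) % m

/-- Oriented path on `n+1` vertices: edge `t` (between `v_t` and `v_{t+1}`) is
oriented forwards iff `σ t = true`. -/
def OPathRel (n : ℕ) (σ : ℕ → Bool) : Fin (n + 1) → Fin (n + 1) → Prop :=
  fun x y => ∃ t : ℕ, t < n ∧
    ((σ t = true ∧ (x : ℕ) = t ∧ (y : ℕ) = t + 1) ∨
     (σ t = false ∧ (x : ℕ) = t + 1 ∧ (y : ℕ) = t))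

/-- Oriented cycle on `m` vertices: edge `t` (between `v_t` and `v_{t+1 mod m}`) is
oriented forwards iff `σ t = true`. -/
def OCycRel (m : ℕ) (σ : ℕ → Bool) : Fin m → Fin m → Prop :=
  fun x y => ∃ t : ℕ, t < m ∧
    ((σ t = true ∧ (x : ℕ) = t ∧ (y : ℕ) = (t + 1) % m) ∨
     (σ t = false ∧ (x : ℕ) = (t + 1) % m ∧ (y : ℕ) = t))

/-- The hat `H_3`: arcs `v_0 → v_1` and `v_2 → v_1`. -/
def H3rel : Fin 3 → Fin 3 → Prop := fun i j => (i = 0 ∧ j = 1) ∨ (i = 2 ∧ j = 1)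

/-- `H_4`: arcs `h_0 → h_3`, `h_1 → h_3`, `h_2 → h_3`. -/
def H4rel : Fin 4 → Fin 4 → Prop := fun i j => (i = 0 ∨ i = 1 ∨ i = 2) ∧ j = 3

/-- `A_4`: arcs `h_0 → h_2`, `h_1 → h_2`, `h_2 → h_3`. -/
def A4rel : Fin 4 → Fin 4 → Prop := fun i j => ((i = 0 ∨ i = 1) ∧ j = 2) ∨ (i = 2 ∧ j = 3)

/-- `H_5`: two directed paths of length two with a common initial vertex `0`:
arcs `0→1`, `1→2`, `0→3`, `3→4`. -/
def H5rel : Fin 5 → Fin 5 → Prop :=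
  fun i j => (i = 0 ∧ j = 1) ∨ (i = 1 ∧ j = 2) ∨ (i = 0 ∧ j = 3) ∨ (i = 3 ∧ j = 4)

/-- `B_2`: arcs `a→b`, `c→b`, `c→d`, `e→d` (vertices `a,b,c,d,e = 0,1,2,3,4`). -/
def B2rel : Fin 5 → Fin 5 → Prop :=
  fun i j => (i = 0 ∧ j = 1) ∨ (i = 2 ∧ j = 1) ∨ (i = 2 ∧ j = 3) ∨ (i = 4 ∧ j = 3)

/-- `X_2`: orientation of `K_{1,4}` with centre `0` of in-degree 2 and out-degree 2:
arcs `1→0`, `2→0`, `0→3`, `0→4`. -/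
def X2rel : Fin 5 → Fin 5 → Prop :=
  fun i j => ((i = 1 ∨ i = 2) ∧ j = 0) ∨ (i = 0 ∧ (j = 3 ∨ j = 4))

/-- An orientation of the star `K_{1,3}`: centre `none`, leaves `some i`;
edge `i` points away from the centre iff `ε i = true`. -/
def starRel (ε : Fin 3 → Bool) : Option (Fin 3) → Option (Fin 3) → Prop :=
  fun u v => ∃ i : Fin 3,
    (ε i = true ∧ u = none ∧ v = some i) ∨ (ε i = false ∧ u = some i ∧ v = none)

/-- An oriented `k`-colouring: for arcs `xy` and `vw`, `f x = f w → f y ≠ f v`. -/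
def OrCol {A : Type} (R : A → A → Prop) {k : ℕ} (f : A → Fin k) : Prop :=
  ∀ x y v w, R x y → R v w → f x = f w → f y ≠ f v

/-- Proper: distinct adjacent vertices get different colours. -/
def ProperCol {A : Type} {B : Type} (R : A → A → Prop) (f : A → B) : Prop :=
  ∀ x y, R x y → x ≠ y → f x ≠ f y

/-- Disjoint union of two directed graphs. -/
def sumRel {A B : Type} (R : A → A → Prop) (S : B → B → Prop) : A ⊕ B → A ⊕ B → Prop
  | Sum.inl a, Sum.inl a' => R a a'
  | Sum.inr b, Sum.inr b' => S b b'
  | _, _ => False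

/-- Net-length of the oriented cycle on `m` vertices with orientation `σ`:
number of forwards arcs minus number of backwards arcs. -/
def netLen (m : ℕ) (σ : ℕ → Bool) : ℤ :=
  (((Finset.range m).filter fun t => σ t = true).card : ℤ) -
    (((Finset.range m).filter fun t => σ t = false).card : ℤ)

/-- Undirected connectivity relation of a directed graph. -/
def UConn {V : Type} (E : V → V → Prop) : V → V → Prop :=
  Relation.ReflTransGen (fun a b => E a b ∨ E b a)

/-- The relation induced on the connected component of `x`. -/
def componentRel {V : Type} (E : V → V → Prop) (x : V) :
    {y : V // UConn E x y} → {y : V // UConn E x y} → Prop :=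
  fun a b => E a.val b.val

/-- Isomorphism of directed graphs. -/
def IsoRel {A B : Type} (R : A → A → Prop) (S : B → B → Prop) : Prop :=
  ∃ e : A ≃ B, ∀ a a', R a a' ↔ S (e a) (e a')

/-- An alternating matching in the oriented path on `n+1` vertices (edges `0,…,n-1`,
orientations `σ`): `μ t` means edge `t` is in the matching.  It is a matching,
saturates every internal (degree-two) vertex, and consecutive matching edges have
opposite orientations. -/
def PathAltMatching (n : ℕ) (σ : ℕ → Bool) (μ : ℕ → Prop) : Prop :=
  (∀ t, μ t → t < n) ∧
  (∀ t, ¬(μ t ∧ μ (t + 1))) ∧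
  (∀ v, 1 ≤ v → v + 1 ≤ n → (μ (v - 1) ∨ μ v)) ∧
  (∀ t t', μ t → μ t' → t < t' → (∀ s, t < s → s < t' → ¬ μ s) → σ t ≠ σ t')

/-- An alternating matching in the oriented cycle on `m` vertices (edges mod `m`):
a matching saturating every vertex whose successive edges (cyclically) have
opposite orientations. -/
def CycAltMatching (m : ℕ) (σ : ℕ → Bool) (μ : ℕ → Prop) : Prop :=
  (∀ t, μ t → t < m) ∧
  (∀ t, t < m → ¬(μ t ∧ μ ((t + 1) % m))) ∧
  (∀ v, v < m → (μ v ∨ μ ((v + m - 1) % m))) ∧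
  (∀ t d, t < m → 0 < d → d < m → μ t → μ ((t + d) % m) →
    (∀ s, 0 < s → s < d → ¬ μ ((t + s) % m)) → σ t ≠ σ ((t + d) % m))

/-!
An iot-injective map to the two vertices of `T_2^r` separates any two neighbours of a vertex, so
every vertex has at most two neighbours and each component, being connected, is an oriented path
or an oriented cycle (a non-backtracking walk enumerates it). Along such a path or cycle,
iot-injectivity says that `v - 1` and `v + 1` get different colours, so the colour changes on
exactly one of any two consecutive edges: the edges where it changes form a matching saturating
every inner vertex. A change along an arc goes from colour `0` to colour `1`, so successive matched
edges are oppositely oriented, i.e. the matching alternates. Conversely an alternating matching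
prescribes the colours (tail `0`, head `1` on every matched arc) consistently. On a cycle of
length `m` the colour flips at every second step, so `m` is a multiple of `4`. Paths on at most
four vertices have alternating matchings, so case (a) is part of case (b).
-/

open Relation

section Generalities

variable {A B T : Type} {R : A → A → Prop} {S : B → B → Prop} {U : T → T → Prop}

lemma NoLoops.ne_of_symmGen (hirr : NoLoops R) {a b : A} (h : SymmGen R a b) : a ≠ b := by
  rintro rfl
  rcases h with h | h <;> exact hirr a h

lemma IsOriented.rel_swap_iff (hor : IsOriented R) (hirr : NoLoops R) {a b : A}
    (h : SymmGen R a b) : R b a ↔ ¬R a b :=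
  ⟨fun hba hab => hor a b (hirr.ne_of_symmGen h) ⟨hab, hba⟩, h.resolve_left⟩

lemma iotInj_iff_symmGen {f : A → B} :
    IotInj R f ↔ ∀ v x y, SymmGen R v x → SymmGen R v y → f x = f y → x = y :=
  ⟨fun h v _ _ hx hy => h v hx.symm hy.symm, fun h v x hx y hy => h v x y (Or.symm hx) (Or.symm hy)⟩

lemma IotHomEx.of_subg (hRS : Subg R S) (hS : IotHomEx S U) : IotHomEx R U := by
  obtain ⟨i, hi, hiRS⟩ := hRS
  obtain ⟨g, hg, hgi⟩ := hS
  refine ⟨g ∘ i, fun x y h => hg _ _ (hiRS x y h), iotInj_iff_symmGen.2 ?_⟩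
  intro v x y hx hy hxy
  have lift : ∀ {a b}, SymmGen R a b → SymmGen S (i a) (i b) := fun h => h.imp (hiRS _ _) (hiRS _ _)
  exact hi (iotInj_iff_symmGen.1 hgi (i v) _ _ (lift hx) (lift hy) hxy)

lemma IsoRel.symm (h : IsoRel R S) : IsoRel S R := by
  obtain ⟨e, he⟩ := h
  exact ⟨e.symm, fun b b' => by simpa using (he (e.symm b) (e.symm b')).symm⟩

lemma IsoRel.subg (h : IsoRel R S) : Subg R S := by
  obtain ⟨e, he⟩ := h
  exact ⟨e, e.injective, fun a a' => (he a a').1⟩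

lemma IotHomEx.of_isoRel (hRS : IsoRel R S) (hS : IotHomEx S U) : IotHomEx R U :=
  hS.of_subg hRS.subg

def DegreeLeTwo (R : A → A → Prop) : Prop :=
  ∀ v a b c, SymmGen R v a → SymmGen R v b → SymmGen R v c → a = b ∨ a = c ∨ b = c

lemma IotHomEx.degreeLeTwo {S : Fin 2 → Fin 2 → Prop} (h : IotHomEx R S) : DegreeLeTwo R := by
  obtain ⟨f, -, hf⟩ := h
  intro v a b c ha hb hc
  have hinj := iotInj_iff_symmGen.1 hf v
  have pigeon : ∀ x y z : Fin 2, x = y ∨ x = z ∨ y = z := by decide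
  rcases pigeon (f a) (f b) (f c) with h | h | h
  · exact Or.inl (hinj _ _ ha hb h)
  · exact Or.inr (Or.inl (hinj _ _ ha hc h))
  · exact Or.inr (Or.inr (hinj _ _ hb hc h))

end Generalities

section Components

variable {V T : Type} {E : V → V → Prop}

lemma uconn_iff_eqvGen {a b : V} : UConn E a b ↔ EqvGen E a b := by
  rw [← EqvGen.reflTransGen_symmGen]; rfl

lemma subg_componentRel (E : V → V → Prop) (x : V) : Subg (componentRel E x) E :=
  ⟨Subtype.val, Subtype.val_injective, fun _ _ h => h⟩

lemma uconn_componentRel (x : V) (p q : {y // UConn E x y}) : UConn (componentRel E x) p q := by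
  suffices h : ∀ y (hy : UConn E x y), EqvGen (componentRel E x) ⟨x, .refl⟩ ⟨y, hy⟩ from
    uconn_iff_eqvGen.2 (((h p p.2).symm _ _).trans _ _ _ (h q q.2))
  intro y hy
  induction hy with
  | refl => exact .refl _
  | @tail c d hxc hcd ih =>
    refine ih.trans _ _ _ ?_
    rcases hcd with h | h
    · exact .rel _ _ h
    · exact .symm _ _ (.rel _ _ h)

lemma IotHomEx.of_forall_componentRel {U : T → T → Prop}
    (h : ∀ x, IotHomEx (componentRel E x) U) : IotHomEx E U := by
  choose g hg hgi using h
  let rep : V → V := fun v => (Quot.mk E v).out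
  have hrep : ∀ v, UConn E (rep v) v := fun v =>
    uconn_iff_eqvGen.2 (Quot.eqvGen_exact (Quot.out_eq (Quot.mk E v)))
  let f : V → T := fun v => g (rep v) ⟨v, hrep v⟩
  have hf : ∀ a b (hab : UConn E (rep a) b), f b = g (rep a) ⟨b, hab⟩ := by
    intro a b hab
    have hrep_eq : rep b = rep a := congrArg Quot.out <|
      (Quot.eqvGen_sound (uconn_iff_eqvGen.1 hab).symm).trans (Quot.out_eq _)
    have transport : ∀ z (hz : z = rep a) (h : UConn E z b), g z ⟨b, h⟩ = g (rep a) ⟨b, hab⟩ := by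
      rintro z rfl h; rfl
    exact transport _ hrep_eq _
  refine ⟨f, fun a b h => ?_, iotInj_iff_symmGen.2 fun v x y hx hy hxy => ?_⟩
  · have hab : UConn E (rep a) b := (hrep a).tail (Or.inl h)
    rw [hf a b hab]
    exact hg (rep a) ⟨a, hrep a⟩ ⟨b, hab⟩ h
  · have hvx : UConn E (rep v) x := (hrep v).tail hx
    have hvy : UConn E (rep v) y := (hrep v).tail hy
    rw [hf v x hvx, hf v y hvy] at hxy
    exact congrArg Subtype.val
      (iotInj_iff_symmGen.1 (hgi (rep v)) ⟨v, hrep v⟩ ⟨x, hvx⟩ ⟨y, hvy⟩ hx hy hxy)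

end Components

section Walk

variable {W : Type} (R : W → W → Prop)

open Classical in
noncomputable def nextVertex (prev cur : W) : W :=
  if h : ∃ c, SymmGen R cur c ∧ c ≠ prev then h.choose else cur

/-- The non-backtracking walk from `u`; it stays put once it reaches a vertex with no neighbour
other than the one it came from. -/
noncomputable def walk (u : W) : ℕ → W
  | 0 => u
  | 1 => nextVertex R u u
  | i + 2 => nextVertex R (walk u i) (walk u (i + 1))

variable {R} {u : W}

lemma symmGen_nextVertex {prev cur : W} (h : ∃ c, SymmGen R cur c ∧ c ≠ prev) :
    SymmGen R cur (nextVertex R prev cur) ∧ nextVertex R prev cur ≠ prev := by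
  rw [nextVertex, dif_pos h]
  exact h.choose_spec

lemma symmGen_walk_zero_one (hirr : NoLoops R) {c : W} (h : SymmGen R u c) :
    SymmGen R (walk R u 0) (walk R u 1) :=
  (symmGen_nextVertex ⟨c, h, (hirr.ne_of_symmGen h).symm⟩).1

lemma symmGen_walk_add_two {i : ℕ} (h : ∃ c, SymmGen R (walk R u (i + 1)) c ∧ c ≠ walk R u i) :
    SymmGen R (walk R u (i + 1)) (walk R u (i + 2)) :=
  (symmGen_nextVertex h).1

lemma walk_add_two_ne (hirr : NoLoops R) {i : ℕ}
    (h : SymmGen R (walk R u (i + 1)) (walk R u (i + 2))) : walk R u (i + 2) ≠ walk R u i := by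
  by_cases hex : ∃ c, SymmGen R (walk R u (i + 1)) c ∧ c ≠ walk R u i
  · exact (symmGen_nextVertex hex).2
  · simp only [walk, nextVertex, dif_neg hex] at h
    exact absurd rfl (hirr.ne_of_symmGen h)

lemma walk_neighbour (hirr : NoLoops R) (hdeg : DegreeLeTwo R) {i : ℕ} {c : W}
    (h₀ : SymmGen R (walk R u i) (walk R u (i + 1)))
    (h₁ : SymmGen R (walk R u (i + 1)) (walk R u (i + 2)))
    (hc : SymmGen R (walk R u (i + 1)) c) : c = walk R u i ∨ c = walk R u (i + 2) := by
  rcases hdeg _ _ _ _ h₀.symm h₁ hc with h | h | h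
  · exact absurd h (walk_add_two_ne hirr h₁).symm
  · exact Or.inl h.symm
  · exact Or.inr h.symm

/-- A revisited vertex other than the start would have three neighbours on the walk. -/
lemma walk_first_repeat (hirr : NoLoops R) (hdeg : DegreeLeTwo R) {i j : ℕ}
    (hstep : ∀ t < j, SymmGen R (walk R u t) (walk R u (t + 1)))
    (hij : i < j) (heq : walk R u i = walk R u j)
    (hmin : ∀ j' < j, ∀ i' < j', walk R u i' ≠ walk R u j') : i = 0 ∧ 3 ≤ j := by
  have h₁ : j ≠ i + 1 := by
    rintro rfl
    exact hirr.ne_of_symmGen (hstep i hij) heq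
  have h₂ : j ≠ i + 2 := by
    rintro rfl
    exact walk_add_two_ne hirr (hstep (i + 1) (by omega)) heq.symm
  refine ⟨?_, by omega⟩
  obtain _ | i := i
  · rfl
  obtain ⟨j, rfl⟩ : ∃ k, j = k + 1 := ⟨j - 1, by omega⟩
  have hc : SymmGen R (walk R u (i + 1)) (walk R u j) := heq ▸ (hstep j (by omega)).symm
  rcases walk_neighbour hirr hdeg (hstep i (by omega)) (hstep (i + 1) (by omega)) hc with h | h
  · exact absurd h.symm (hmin j (by omega) i (by omega))
  · exact absurd h.symm (hmin j (by omega) (i + 2) (by omega))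

lemma exists_walk_return (hirr : NoLoops R) (hdeg : DegreeLeTwo R) {i j : ℕ}
    (hstep : ∀ t < j, SymmGen R (walk R u t) (walk R u (t + 1)))
    (hij : i < j) (heq : walk R u i = walk R u j) :
    ∃ m ≤ j, 3 ≤ m ∧ walk R u m = u ∧ ∀ j' < m, ∀ i' < j', walk R u i' ≠ walk R u j' := by
  classical
  have hrep : ∃ j, ∃ i < j, walk R u i = walk R u j := ⟨j, i, hij, heq⟩
  obtain ⟨i₀, hi₀, heq₀⟩ := Nat.find_spec hrep
  have hle : Nat.find hrep ≤ j := Nat.find_min' hrep ⟨i, hij, heq⟩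
  have hmin : ∀ j' < Nat.find hrep, ∀ i' < j', walk R u i' ≠ walk R u j' :=
    fun j' hj' i' hi' he => Nat.find_min hrep hj' ⟨i', hi', he⟩
  obtain ⟨rfl, h₃⟩ :=
    walk_first_repeat hirr hdeg (fun t ht => hstep t (by omega)) hi₀ heq₀ hmin
  exact ⟨Nat.find hrep, hle, h₃, heq₀.symm, hmin⟩

lemma walk_periodic (hirr : NoLoops R) (hdeg : DegreeLeTwo R) {m : ℕ}
    (hstep : ∀ t, SymmGen R (walk R u t) (walk R u (t + 1))) (hm : 0 < m)
    (hmu : walk R u m = u) (h1 : walk R u 1 ≠ walk R u (m - 1)) :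
    Function.Periodic (walk R u) m := by
  obtain ⟨k, rfl⟩ : ∃ k, m = k + 1 := ⟨m - 1, by omega⟩
  have hk1 : walk R u (k + 1 + 1) = walk R u 1 := by
    have hu1 : SymmGen R (walk R u (k + 1)) (walk R u 1) := by
      rw [hmu]
      exact hstep 0
    rcases hdeg _ _ _ _ hu1 (hstep k).symm (hstep (k + 1)) with h | h | h
    · exact absurd h h1
    · exact h.symm
    · exact absurd h.symm (walk_add_two_ne hirr (hstep (k + 1)))
  suffices h : ∀ i, walk R u (i + (k + 1)) = walk R u i ∧
      walk R u (i + 1 + (k + 1)) = walk R u (i + 1) from fun i => (h i).1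
  intro i
  induction i with
  | zero => exact ⟨by rw [zero_add, hmu]; rfl, by rw [zero_add, add_comm]; exact hk1⟩
  | succ i ih =>
    refine ⟨ih.2, ?_⟩
    rw [show i + 1 + 1 + (k + 1) = i + (k + 1) + 2 by omega]
    change nextVertex R _ _ = nextVertex R _ _
    rw [ih.1, show i + (k + 1) + 1 = i + 1 + (k + 1) by omega, ih.2]

end Walk

section Classification

variable {W : Type} {R : W → W → Prop}

lemma oPathRel_iff {n : ℕ} {σ : ℕ → Bool} {i j : Fin (n + 1)} :
    OPathRel n σ i j ↔
      (DPathRel (n + 1) i j ∧ σ i = true) ∨ (DPathRel (n + 1) j i ∧ σ j = false) := by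
  simp only [OPathRel, DPathRel]
  constructor
  · rintro ⟨t, -, ⟨hσ, rfl, hj⟩ | ⟨hσ, hi, rfl⟩⟩
    · exact Or.inl ⟨hj, hσ⟩
    · exact Or.inr ⟨hi, hσ⟩
  · rintro (⟨hj, hσ⟩ | ⟨hi, hσ⟩)
    · exact ⟨i, by omega, Or.inl ⟨hσ, rfl, hj⟩⟩
    · exact ⟨j, by omega, Or.inr ⟨hσ, hi, rfl⟩⟩

lemma oCycRel_iff {m : ℕ} {σ : ℕ → Bool} {i j : Fin m} :
    OCycRel m σ i j ↔ (DCycRel m i j ∧ σ i = true) ∨ (DCycRel m j i ∧ σ j = false) := by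
  simp only [OCycRel, DCycRel]
  constructor
  · rintro ⟨t, -, ⟨hσ, rfl, hj⟩ | ⟨hσ, hi, rfl⟩⟩
    · exact Or.inl ⟨hj, hσ⟩
    · exact Or.inr ⟨hi, hσ⟩
  · rintro (⟨hj, hσ⟩ | ⟨hi, hσ⟩)
    · exact ⟨i, i.isLt, Or.inl ⟨hσ, rfl, hj⟩⟩
    · exact ⟨j, j.isLt, Or.inr ⟨hσ, hi, rfl⟩⟩

lemma mem_of_symmGen_closed (hconn : ∀ p q, UConn R p q) {s : Set W} {a : W} (ha : a ∈ s)
    (hs : ∀ x ∈ s, ∀ y, SymmGen R x y → y ∈ s) (b : W) : b ∈ s := by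
  induction hconn a b with
  | refl => exact ha
  | tail _ hcd ih => exact hs _ ih _ hcd

/-- If, along the injective enumeration `e`, the underlying graph of `R` is that of the index
graph `D`, then `R` is isomorphic to the orientation `O` of `D` that directs each edge `{i, s i}`
as `R` does. -/
lemma isoRel_of_enum (hor : IsOriented R) (hirr : NoLoops R) (hconn : ∀ p q, UConn R p q)
    {N : ℕ} {D O : Fin N → Fin N → Prop} (e s : Fin N → W) (i₀ : Fin N)
    (hinj : Function.Injective e)
    (hnbr : ∀ i c, SymmGen R (e i) c → ∃ k, c = e k ∧ SymmGen D i k)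
    (hedge : ∀ i j, D i j → SymmGen R (e i) (e j)) (hsucc : ∀ i j, D i j → e j = s i)
    (σ : Fin N → Bool) (hσ : ∀ i, σ i = true ↔ R (e i) (s i))
    (hO : ∀ i j, O i j ↔ (D i j ∧ σ i = true) ∨ (D j i ∧ σ j = false)) :
    IsoRel O R := by
  have hsurj : Function.Surjective e :=
    mem_of_symmGen_closed hconn (s := Set.range e) ⟨i₀, rfl⟩ fun _ ⟨i, hi⟩ c hc =>
      (hnbr i c (hi ▸ hc)).imp fun k hk => hk.1.symm
  have hD : ∀ i j, SymmGen R (e i) (e j) ↔ SymmGen D i j := by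
    refine fun i j => ⟨fun h => ?_, fun h => h.elim (hedge i j) fun h => (hedge j i h).symm⟩
    obtain ⟨k, hk, hD⟩ := hnbr i _ h
    rwa [hinj hk]
  refine ⟨Equiv.ofBijective e ⟨hinj, hsurj⟩, fun i j => ?_⟩
  change O i j ↔ R (e i) (e j)
  simp only [hO, hσ, Bool.eq_false_iff, ne_eq]
  constructor
  · rintro (⟨hij, hR⟩ | ⟨hji, hR⟩)
    · rwa [hsucc i j hij]
    · rw [← hsucc j i hji] at hR
      exact (hor.rel_swap_iff hirr ((hD i j).2 (Or.inr hji)).symm).2 hR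
  · intro hR
    rcases (hD i j).1 (Or.inl hR) with hij | hji
    · exact Or.inl ⟨hij, hsucc i j hij ▸ hR⟩
    · exact Or.inr ⟨hji, hsucc j i hji ▸ (hor.rel_swap_iff hirr (Or.inr hR)).1 hR⟩

lemma mod_add_pred_mod {m i : ℕ} (hi : i < m) : ((i + m - 1) % m + 1) % m = i := by
  rw [Nat.mod_add_mod, Nat.sub_add_cancel (by omega), Nat.add_mod_right, Nat.mod_eq_of_lt hi]

/-- From a vertex of degree at most one the walk can never come back, so it stops, and by
connectivity it has then traced out the whole graph as a path. -/
theorem exists_isoRel_oPathRel [Finite W] (hor : IsOriented R) (hirr : NoLoops R)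
    (hdeg : DegreeLeTwo R) (hconn : ∀ p q, UConn R p q) {u : W}
    (hu : ∀ c c', SymmGen R u c → SymmGen R u c' → c = c') :
    ∃ n σ, IsoRel (OPathRel n σ) R := by
  classical
  have norep : ∀ j, (∀ t < j, SymmGen R (walk R u t) (walk R u (t + 1))) →
      ∀ i < j, walk R u i ≠ walk R u j := by
    intro j hstep i hij heq
    obtain ⟨m, hmj, hm3, hmu, hmin⟩ := exists_walk_return hirr hdeg hstep hij heq
    have hlast := hstep (m - 1) (by omega)
    rw [Nat.sub_add_cancel (by omega), hmu] at hlast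
    exact hmin (m - 1) (by omega) 1 (by omega) (hu _ _ (hstep 0 (by omega)) hlast.symm)
  have hstop : ∃ T, ¬SymmGen R (walk R u T) (walk R u (T + 1)) := by
    by_contra! h
    obtain ⟨i, j, hne, he⟩ := Finite.exists_ne_map_eq_of_infinite (walk R u)
    rcases hne.lt_or_gt with hij | hji
    · exact norep j (fun t _ => h t) i hij he
    · exact norep i (fun t _ => h t) j hji he.symm
  obtain ⟨T, hT, hstep⟩ : ∃ T, ¬SymmGen R (walk R u T) (walk R u (T + 1)) ∧
      ∀ t < T, SymmGen R (walk R u t) (walk R u (t + 1)) :=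
    ⟨Nat.find hstop, Nat.find_spec hstop, fun t ht => not_not.1 (Nat.find_min hstop ht)⟩
  have hinj : Function.Injective fun i : Fin (T + 1) => walk R u i := by
    intro i j he
    rcases lt_trichotomy (i : ℕ) j with h | h | h
    · exact absurd he (norep j (fun t ht => hstep t (by omega)) i h)
    · exact Fin.ext h
    · exact absurd he.symm (norep i (fun t ht => hstep t (by omega)) j h)
  have hnbr : ∀ (i : Fin (T + 1)) c, SymmGen R (walk R u i) c →
      ∃ k : Fin (T + 1), c = walk R u k ∧ SymmGen (DPathRel (T + 1)) i k := by
    rintro ⟨_ | i, hi⟩ c hc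
    · have h₀ := symmGen_walk_zero_one hirr hc
      have hT0 : T ≠ 0 := by rintro rfl; exact hT h₀
      exact ⟨⟨1, by omega⟩, hu _ _ hc h₀, Or.inl rfl⟩
    rcases (show i + 1 < T ∨ i + 1 = T by omega) with hlt | rfl
    · rcases walk_neighbour hirr hdeg (hstep i (by omega)) (hstep (i + 1) hlt) hc with rfl | rfl
      · exact ⟨⟨i, by omega⟩, rfl, Or.inr rfl⟩
      · exact ⟨⟨i + 2, by omega⟩, rfl, Or.inl rfl⟩
    · have hc' : c = walk R u i := by
        by_contra hne
        exact hT (symmGen_walk_add_two ⟨c, hc, hne⟩)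
      exact ⟨⟨i, by omega⟩, hc', Or.inr rfl⟩
  have hsucc : ∀ i j : Fin (T + 1), DPathRel (T + 1) i j → walk R u j = walk R u (i + 1) :=
    fun i j (h : (j : ℕ) = i + 1) => congrArg (walk R u) h
  have hedge : ∀ i j : Fin (T + 1), DPathRel (T + 1) i j → SymmGen R (walk R u i) (walk R u j) :=
    fun i j (h : (j : ℕ) = i + 1) => h ▸ hstep i (by omega)
  exact ⟨T, fun t => decide (R (walk R u t) (walk R u (t + 1))),
    isoRel_of_enum hor hirr hconn _ (fun i => walk R u (i + 1)) 0 hinj hnbr hedge hsucc _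
      (fun _ => decide_eq_true_iff) fun _ _ => oPathRel_iff⟩

/-- Here the walk never stops; by finiteness it returns to its start, closing up a cycle. -/
theorem exists_isoRel_oCycRel [Finite W] (hor : IsOriented R) (hirr : NoLoops R)
    (hdeg : DegreeLeTwo R) (hconn : ∀ p q, UConn R p q) (u : W)
    (htwo : ∀ v, ∃ c c', SymmGen R v c ∧ SymmGen R v c' ∧ c ≠ c') :
    ∃ m σ, 3 ≤ m ∧ IsoRel (OCycRel m σ) R := by
  classical
  have hstep : ∀ t, SymmGen R (walk R u t) (walk R u (t + 1)) := by
    rintro (_ | t)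
    · obtain ⟨c, -, hc, -⟩ := htwo u
      exact symmGen_walk_zero_one hirr hc
    · obtain ⟨c, c', hc, hc', hne⟩ := htwo (walk R u (t + 1))
      refine symmGen_walk_add_two ?_
      by_cases h : c = walk R u t
      · exact ⟨c', hc', h ▸ hne.symm⟩
      · exact ⟨c, hc, h⟩
  obtain ⟨m, hm3, hmu, hmin⟩ : ∃ m, 3 ≤ m ∧ walk R u m = u ∧
      ∀ j' < m, ∀ i' < j', walk R u i' ≠ walk R u j' := by
    obtain ⟨i, j, hne, he⟩ := Finite.exists_ne_map_eq_of_infinite (walk R u)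
    rcases hne.lt_or_gt with h | h
    · obtain ⟨m, -, hm⟩ := exists_walk_return hirr hdeg (fun t _ => hstep t) h he
      exact ⟨m, hm⟩
    · obtain ⟨m, -, hm⟩ := exists_walk_return hirr hdeg (fun t _ => hstep t) h he.symm
      exact ⟨m, hm⟩
  have hm : 0 < m := by omega
  have hper := walk_periodic hirr hdeg hstep hm hmu (hmin (m - 1) (by omega) 1 (by omega))
  have hinj : Function.Injective fun i : Fin m => walk R u i := by
    intro i j he
    rcases lt_trichotomy (i : ℕ) j with h | h | h
    · exact absurd he (hmin j j.isLt i h)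
    · exact Fin.ext h
    · exact absurd he.symm (hmin i i.isLt j h)
  have hsucc : ∀ i j : Fin m, DCycRel m i j → walk R u j = walk R u (i + 1) :=
    fun i j (h : (j : ℕ) = (i + 1) % m) => h ▸ hper.map_mod_nat _
  have hnbr : ∀ (i : Fin m) c, SymmGen R (walk R u i) c →
      ∃ k : Fin m, c = walk R u k ∧ SymmGen (DCycRel m) i k := by
    intro i c hc
    rw [← hper, show (i : ℕ) + m = i + m - 1 + 1 by omega] at hc
    rcases walk_neighbour hirr hdeg (hstep _) (hstep _) hc with rfl | rfl
    · exact ⟨⟨_, Nat.mod_lt _ hm⟩, (hper.map_mod_nat _).symm, Or.inr (mod_add_pred_mod i.isLt).symm⟩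
    · refine ⟨⟨_, Nat.mod_lt (i + 1) hm⟩, ?_, Or.inl rfl⟩
      rw [hper.map_mod_nat, show (i : ℕ) + m - 1 + 2 = i + 1 + m by omega, hper]
  refine ⟨m, fun t => decide (R (walk R u t) (walk R u (t + 1))), hm3,
    isoRel_of_enum hor hirr hconn _ (fun i => walk R u (i + 1)) ⟨0, hm⟩ hinj hnbr
      (fun i j hij => hsucc i j hij ▸ hstep i) hsucc _ (fun _ => decide_eq_true_iff)
      fun _ _ => oCycRel_iff⟩

theorem path_or_cycle [Finite W] [Nonempty W] (hor : IsOriented R) (hirr : NoLoops R)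
    (hdeg : DegreeLeTwo R) (hconn : ∀ p q, UConn R p q) :
    (∃ n σ, IsoRel (OPathRel n σ) R) ∨ ∃ m σ, 3 ≤ m ∧ IsoRel (OCycRel m σ) R := by
  by_cases h : ∃ u : W, ∀ c c', SymmGen R u c → SymmGen R u c' → c = c'
  · obtain ⟨u, hu⟩ := h
    exact Or.inl (exists_isoRel_oPathRel hor hirr hdeg hconn hu)
  · push Not at h
    exact Or.inr (exists_isoRel_oCycRel hor hirr hdeg hconn (Classical.arbitrary W) h)

end Classification

section ColourSequences

/-- `G` colours the vertices `0, 1, 2, …` of an oriented path or cycle homomorphically to `T_2^r`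
on edge `t`, which points from `t` to `t + 1` iff `σ t = true`. -/
def RespectsArc (σ : ℕ → Bool) (G : ℕ → Fin 2) (t : ℕ) : Prop :=
  (σ t = true → G t ≤ G (t + 1)) ∧ (σ t = false → G (t + 1) ≤ G t)

variable {σ : ℕ → Bool} {G : ℕ → Fin 2} {m n : ℕ}

lemma fin_two_eq_of_ne_of_ne {a b c : Fin 2} (hab : a ≠ b) (hbc : b ≠ c) : a = c := by
  revert a b c; decide

lemma fin_two_eq_iff_of_ne {a b c : Fin 2} (hab : a ≠ b) : b = c ↔ a ≠ c := by
  revert a b c; decide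

lemma Function.Periodic.map_mod_add {α : Type} {f : ℕ → α} (hf : Function.Periodic f m)
    (a b : ℕ) : f (a % m + b) = f (a + b) := by
  rw [← hf.map_mod_nat, Nat.mod_add_mod, hf.map_mod_nat]

lemma eq_of_forall_eq_succ {a b : ℕ} (hab : a ≤ b) (h : ∀ s, a ≤ s → s < b → G s = G (s + 1)) :
    G a = G b := by
  induction b, hab using Nat.le_induction with
  | base => rfl
  | succ b hab ih => exact (ih fun s hs hsb => h s hs (by omega)).trans (h b hab (by omega))

/-- A colour change along an arc goes from colour `0` at its tail to colour `1` at its head. -/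
lemma RespectsArc.ne_of_change {t t' : ℕ} (ht : RespectsArc σ G t) (ht' : RespectsArc σ G t')
    (hc : G t ≠ G (t + 1)) (hc' : G t' ≠ G (t' + 1)) (heq : G (t + 1) = G t') : σ t ≠ σ t' := by
  have up : ∀ a b c d : Fin 2, a ≤ b → a ≠ b → b = c → c ≤ d → c ≠ d → False := by decide
  have down : ∀ a b c d : Fin 2, b ≤ a → a ≠ b → b = c → d ≤ c → c ≠ d → False := by decide
  intro hσ
  cases hb : σ t
  · exact down _ _ _ _ (ht.2 hb) hc heq (ht'.2 (hσ ▸ hb)) hc'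
  · exact up _ _ _ _ (ht.1 hb) hc heq (ht'.1 (hσ ▸ hb)) hc'

theorem exists_pathAltMatching (hresp : ∀ t < n, RespectsArc σ G t)
    (hiot : ∀ v, v + 2 ≤ n → G v ≠ G (v + 2)) : ∃ μ, PathAltMatching n σ μ := by
  refine ⟨fun t => t < n ∧ G t ≠ G (t + 1), fun t ht => ht.1, ?_, ?_, ?_⟩
  · rintro t ⟨⟨-, h₁⟩, ht, h₂⟩
    exact hiot t (by omega) (fin_two_eq_of_ne_of_ne h₁ h₂)
  · rintro (_ | v) hv hvn
    · omega
    by_contra! h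
    simp only [Nat.add_sub_cancel] at h
    exact hiot v (by omega) ((h.1 (by omega)).trans (h.2 (by omega)))
  · rintro t t' ⟨htn, hc⟩ ⟨htn', hc'⟩ htt' hgap
    refine (hresp t htn).ne_of_change (hresp t' htn') hc hc' (eq_of_forall_eq_succ htt' ?_)
    exact fun s hs hst' => not_not.1 fun h => hgap s (by omega) hst' ⟨by omega, h⟩

/-- `G (2 * j) = G 0` exactly for even `j`; apply this to `j = m` and then to `j = m / 2`. -/
lemma four_dvd_of_periodic (hper : Function.Periodic G m) (hflip : ∀ v, G v ≠ G (v + 2)) :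
    4 ∣ m := by
  have hpar : ∀ j, G (2 * j) = G 0 ↔ Even j := by
    intro j
    induction j with
    | zero => simp
    | succ j ih => rw [Nat.even_add_one, ← ih, mul_add, fin_two_eq_iff_of_ne (hflip _)]
  have hm : Even m := (hpar m).1 (by simpa using hper.nat_mul_eq 2)
  obtain ⟨k, rfl⟩ := hm
  have hk : Even k := (hpar k).1 (by rw [two_mul]; exact hper.eq)
  obtain ⟨l, rfl⟩ := hk
  exact ⟨l, by ring⟩

theorem exists_cycAltMatching (hper : Function.Periodic G m) (hresp : ∀ t < m, RespectsArc σ G t)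
    (hiot : ∀ v, G v ≠ G (v + 2)) : ∃ μ, CycAltMatching m σ μ := by
  refine ⟨fun t => t < m ∧ G t ≠ G (t + 1), fun t ht => ht.1, ?_, ?_, ?_⟩
  · rintro t - ⟨⟨-, h₁⟩, -, h₂⟩
    rw [hper.map_mod_nat, hper.map_mod_add] at h₂
    exact hiot t (fin_two_eq_of_ne_of_ne h₁ h₂)
  · intro v hv
    by_contra! h
    simp only [hper.map_mod_nat, hper.map_mod_add] at h
    have h₁ := h.2 (Nat.mod_lt _ (by omega))
    rw [show v + m - 1 + 1 = v + m by omega, hper] at h₁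
    apply hiot (v + m - 1)
    rw [h₁, h.1 hv, show v + m - 1 + 2 = v + 1 + m by omega, hper]
  · rintro t d ht hd0 hdm ⟨-, hc⟩ ⟨hlt, hc'⟩ hgap
    refine (hresp t ht).ne_of_change (hresp _ hlt) hc hc' ?_
    rw [hper.map_mod_nat]
    refine eq_of_forall_eq_succ (by omega) fun s hs hsd => not_not.1 fun h => ?_
    refine hgap (s - t) (by omega) (by omega) ⟨Nat.mod_lt _ (by omega), ?_⟩
    rwa [hper.map_mod_nat, hper.map_mod_add, show t + (s - t) = s by omega]

end ColourSequences

section MatchingColourings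

/-- The colour of the later endpoint `t + 1` of a matched edge `t` with orientation `b`: the head
of an arc gets colour `1`, its tail colour `0`. -/
def headColour (b : Bool) : Fin 2 := if b then 1 else 0

lemma headColour_not_ne (b : Bool) : headColour (!b) ≠ headColour b := by
  cases b <;> decide

lemma headColour_eq_not_of_ne {b b' : Bool} (h : b ≠ b') : headColour b = headColour (!b') := by
  cases b <;> cases b' <;> simp_all

def FollowsMatching (σ : ℕ → Bool) (μ : ℕ → Prop) (G : ℕ → Fin 2) (t : ℕ) : Prop :=
  (μ t → G t = headColour (!σ t) ∧ G (t + 1) = headColour (σ t)) ∧ (¬μ t → G (t + 1) = G t)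

variable {σ : ℕ → Bool} {μ : ℕ → Prop} {G : ℕ → Fin 2} {m n : ℕ}

lemma FollowsMatching.respectsArc {t : ℕ} (h : FollowsMatching σ μ G t) : RespectsArc σ G t := by
  by_cases hμ : μ t
  · obtain ⟨h₀, h₁⟩ := h.1 hμ
    rw [RespectsArc, h₀, h₁]
    cases σ t <;> decide
  · rw [RespectsArc, h.2 hμ]
    exact ⟨fun _ => le_rfl, fun _ => le_rfl⟩

lemma FollowsMatching.ne_add_two {v : ℕ} (h₀ : FollowsMatching σ μ G v)
    (h₁ : FollowsMatching σ μ G (v + 1)) (hM : ¬(μ v ∧ μ (v + 1))) (hS : μ v ∨ μ (v + 1)) :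
    G v ≠ G (v + 2) := by
  rcases hS with hμ | hμ
  · rw [(h₀.1 hμ).1, h₁.2 fun h => hM ⟨hμ, h⟩, (h₀.1 hμ).2]
    exact headColour_not_ne _
  · rw [← h₀.2 fun h => hM ⟨h, hμ⟩, (h₁.1 hμ).1, (h₁.1 hμ).2]
    exact headColour_not_ne _

open Classical in
/-- The start is coloured like the tail of the first matched edge, which is edge `0` or `1`. -/
noncomputable def pathColouring (σ : ℕ → Bool) (μ : ℕ → Prop) : ℕ → Fin 2
  | 0 => if μ 0 then headColour (!σ 0) else headColour (!σ 1)
  | t + 1 => if μ t then headColour (σ t) else pathColouring σ μ t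

lemma followsMatching_pathColouring (h : PathAltMatching n σ μ) {t : ℕ} (ht : t < n) :
    FollowsMatching σ μ (pathColouring σ μ) t := by
  obtain ⟨-, hM, hS, hA⟩ := h
  refine ⟨fun hμ => ⟨?_, by simp [pathColouring, hμ]⟩, fun hμ => by simp [pathColouring, hμ]⟩
  match t, hμ with
  | 0, hμ => simp [pathColouring, hμ]
  | 1, hμ =>
    have h₀ : ¬μ 0 := fun h => hM 0 ⟨h, hμ⟩
    simp [pathColouring, h₀]
  | s + 2, hμ =>
    have h₁ : ¬μ (s + 1) := fun h => hM (s + 1) ⟨h, hμ⟩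
    have h₀ : μ s := (hS (s + 1) (by omega) (by omega)).resolve_right h₁
    have hσ := hA s (s + 2) h₀ hμ (by omega) fun r hr hr' => by rwa [show r = s + 1 by omega]
    simp [pathColouring, h₀, h₁, headColour_eq_not_of_ne hσ]

lemma mod_succ_add_pred_mod (hm : 0 < m) (t : ℕ) : ((t + 1) % m + m - 1) % m = t % m := by
  rw [show (t + 1) % m + m - 1 = (t + 1) % m + (m - 1) by omega, Nat.mod_add_mod,
    show t + 1 + (m - 1) = t + m by omega, Nat.add_mod_right]

/-- On the cycle every vertex is covered by exactly one matched edge, which fixes its colour. -/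
noncomputable def cycleColouring (m : ℕ) (σ : ℕ → Bool) (μ : ℕ → Prop) (t : ℕ) : Fin 2 :=
  open Classical in
  if μ (t % m) then headColour (!σ (t % m)) else headColour (σ ((t + m - 1) % m))

lemma cycleColouring_periodic : Function.Periodic (cycleColouring m σ μ) m := by
  intro t
  rw [cycleColouring, cycleColouring, Nat.add_mod_right,
    show t + m + m - 1 = t + m - 1 + m by omega, Nat.add_mod_right]

lemma CycAltMatching.mod (hm : 3 ≤ m) (h : CycAltMatching m σ μ) :
    (∀ t, ¬(μ (t % m) ∧ μ ((t + 1) % m))) ∧ (∀ t, μ (t % m) ∨ μ ((t + 1) % m)) ∧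
      ∀ t, μ (t % m) → μ ((t + 2) % m) → σ (t % m) ≠ σ ((t + 2) % m) := by
  obtain ⟨-, hM, hS, hA⟩ := h
  have hM' : ∀ t, ¬(μ (t % m) ∧ μ ((t + 1) % m)) := fun t => by
    simpa only [Nat.mod_add_mod] using hM (t % m) (Nat.mod_lt _ (by omega))
  refine ⟨hM', fun t => ?_, fun t h₀ h₂ => ?_⟩
  · simpa only [mod_succ_add_pred_mod (show 0 < m by omega), or_comm]
      using hS ((t + 1) % m) (Nat.mod_lt _ (by omega))
  · have hgap : ∀ s, 0 < s → s < 2 → ¬μ ((t % m + s) % m) := fun s hs hs' h₁ => by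
      rw [show s = 1 by omega, Nat.mod_add_mod] at h₁
      exact hM' t ⟨h₀, h₁⟩
    simpa only [Nat.mod_add_mod] using
      hA (t % m) 2 (Nat.mod_lt _ (by omega)) (by omega) (by omega) h₀
        (by rwa [Nat.mod_add_mod]) hgap

lemma followsMatching_cycleColouring (hm : 0 < m) (hM : ∀ t, ¬(μ (t % m) ∧ μ ((t + 1) % m)))
    (hS : ∀ t, μ (t % m) ∨ μ ((t + 1) % m))
    (hA : ∀ t, μ (t % m) → μ ((t + 2) % m) → σ (t % m) ≠ σ ((t + 2) % m)) (t : ℕ) :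
    FollowsMatching (fun t => σ (t % m)) (fun t => μ (t % m)) (cycleColouring m σ μ) t := by
  refine ⟨fun hμ => ⟨by simp [cycleColouring, hμ], ?_⟩, fun hμ => ?_⟩
  · have h₁ : ¬μ ((t + 1) % m) := fun h₁ => hM t ⟨hμ, h₁⟩
    simp [cycleColouring, h₁, show t + 1 + m - 1 = t + m by omega]
  · have h₁ : μ ((t + 1) % m) := (hS t).resolve_left hμ
    have hprev : μ ((t + m - 1) % m) := by
      simpa [show t + m - 1 + 1 = t + m by omega, hμ] using hS (t + m - 1)
    have hwrap : (t + m - 1 + 2) % m = (t + 1) % m := by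
      rw [show t + m - 1 + 2 = t + 1 + m by omega, Nat.add_mod_right]
    have hσ := hA (t + m - 1) hprev (hwrap ▸ h₁)
    rw [hwrap] at hσ
    simp [cycleColouring, h₁, hμ, headColour_eq_not_of_ne hσ]

end MatchingColourings

section OrientedPathsAndCycles

variable {σ : ℕ → Bool} {G : ℕ → Fin 2} {m n : ℕ}

lemma symmGen_oPathRel_iff {i j : Fin (n + 1)} :
    SymmGen (OPathRel n σ) i j ↔ SymmGen (DPathRel (n + 1)) i j := by
  rw [SymmGen, SymmGen, oPathRel_iff, oPathRel_iff]
  cases σ i <;> cases σ j <;> simp [or_comm]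

lemma symmGen_oCycRel_iff {i j : Fin m} :
    SymmGen (OCycRel m σ) i j ↔ SymmGen (DCycRel m) i j := by
  rw [SymmGen, SymmGen, oCycRel_iff, oCycRel_iff]
  cases σ i <;> cases σ j <;> simp [or_comm]

lemma isHom_oPathRel_iff {f : Fin (n + 1) → Fin 2} (hG : ∀ i, f i = G i) :
    IsHom (OPathRel n σ) T2r f ↔ ∀ t < n, RespectsArc σ G t := by
  constructor
  · intro hf t ht
    refine ⟨fun hσ => ?_, fun hσ => ?_⟩
    · simpa [T2r, hG] using hf ⟨t, by omega⟩ ⟨t + 1, by omega⟩ ⟨t, ht, Or.inl ⟨hσ, rfl, rfl⟩⟩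
    · simpa [T2r, hG] using hf ⟨t + 1, by omega⟩ ⟨t, by omega⟩ ⟨t, ht, Or.inr ⟨hσ, rfl, rfl⟩⟩
  · rintro h x y ⟨t, ht, ⟨hσ, hx, hy⟩ | ⟨hσ, hx, hy⟩⟩
    · simpa [T2r, hG, hx, hy] using (h t ht).1 hσ
    · simpa [T2r, hG, hx, hy] using (h t ht).2 hσ

lemma isHom_oCycRel_iff {f : Fin m → Fin 2} (hG : ∀ i, f i = G i)
    (hper : Function.Periodic G m) : IsHom (OCycRel m σ) T2r f ↔ ∀ t < m, RespectsArc σ G t := by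
  have hlt : ∀ t < m, (t + 1) % m < m := fun t ht => Nat.mod_lt _ (by omega)
  constructor
  · intro hf t ht
    refine ⟨fun hσ => ?_, fun hσ => ?_⟩
    · simpa [T2r, hG, hper.map_mod_nat] using
        hf ⟨t, ht⟩ ⟨_, hlt t ht⟩ ⟨t, ht, Or.inl ⟨hσ, rfl, rfl⟩⟩
    · simpa [T2r, hG, hper.map_mod_nat] using
        hf ⟨_, hlt t ht⟩ ⟨t, ht⟩ ⟨t, ht, Or.inr ⟨hσ, rfl, rfl⟩⟩
  · rintro h x y ⟨t, ht, ⟨hσ, hx, hy⟩ | ⟨hσ, hx, hy⟩⟩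
    · simpa [T2r, hG, hx, hy, hper.map_mod_nat] using (h t ht).1 hσ
    · simpa [T2r, hG, hx, hy, hper.map_mod_nat] using (h t ht).2 hσ

lemma iotInj_oPathRel_iff {f : Fin (n + 1) → Fin 2} (hG : ∀ i, f i = G i) :
    IotInj (OPathRel n σ) f ↔ ∀ v, v + 2 ≤ n → G v ≠ G (v + 2) := by
  simp only [iotInj_iff_symmGen, symmGen_oPathRel_iff]
  simp only [SymmGen, DPathRel, hG]
  constructor
  · intro h v hv heq
    have := h ⟨v + 1, by omega⟩ ⟨v, by omega⟩ ⟨v + 2, by omega⟩ (Or.inr rfl) (Or.inl rfl) heq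
    simp [Fin.ext_iff] at this
  · intro h p x y hx hy hxy
    ext
    rcases hx with hx | hx <;> rcases hy with hy | hy
    · omega
    · exact absurd (hxy.symm.trans (by rw [hx, show (p : ℕ) = y + 1 by omega])) (h y (by omega))
    · exact absurd (hxy.trans (by rw [hy, show (p : ℕ) = x + 1 by omega])) (h x (by omega))
    · omega

lemma iotInj_oCycRel_iff (hm : 3 ≤ m) {f : Fin m → Fin 2} (hG : ∀ i, f i = G i)
    (hper : Function.Periodic G m) : IotInj (OCycRel m σ) f ↔ ∀ v, G v ≠ G (v + 2) := by
  simp only [iotInj_iff_symmGen, symmGen_oCycRel_iff]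
  simp only [SymmGen, DCycRel, hG]
  constructor
  · intro h v heq
    have hx : (v % m + 1) % m = (v + 1) % m := Nat.mod_add_mod _ _ _
    have hy : ((v + 1) % m + 1) % m = (v + 2) % m := Nat.mod_add_mod _ _ _
    have := h ⟨(v + 1) % m, Nat.mod_lt _ (by omega)⟩ ⟨v % m, Nat.mod_lt _ (by omega)⟩
      ⟨(v + 2) % m, Nat.mod_lt _ (by omega)⟩ (Or.inr hx.symm) (Or.inl hy.symm)
      (by simpa [hper.map_mod_nat] using heq)
    have h2 : 2 ≡ 0 [MOD m] := Nat.ModEq.add_left_cancel' v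
      (show (v + 2) % m = (v + 0) % m from (congrArg Fin.val this).symm)
    rw [Nat.ModEq, Nat.mod_eq_of_lt (by omega), Nat.zero_mod] at h2
    omega
  · intro h p x y hx hy hxy
    ext
    rcases hx with hx | hx <;> rcases hy with hy | hy
    · omega
    · exact absurd (by rw [← hxy, hx, hy, hper.map_mod_nat, hper.map_mod_add]) (h y)
    · exact absurd (by rw [hxy, hy, hx, hper.map_mod_nat, hper.map_mod_add]) (h x)
    · have hxy' : (x : ℕ) + 1 ≡ y + 1 [MOD m] := hx.symm.trans hy
      simpa [Nat.ModEq, Nat.mod_eq_of_lt x.isLt, Nat.mod_eq_of_lt y.isLt] using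
        Nat.ModEq.add_right_cancel' 1 hxy'

theorem iotHomEx_oPathRel_iff : IotHomEx (OPathRel n σ) T2r ↔ ∃ μ, PathAltMatching n σ μ := by
  constructor
  · rintro ⟨f, hf, hfi⟩
    let G : ℕ → Fin 2 := fun t => f ⟨min t n, by omega⟩
    have hG : ∀ i, f i = G i := fun i => by simp [G, Nat.min_eq_left (Nat.le_of_lt_succ i.isLt)]
    exact exists_pathAltMatching ((isHom_oPathRel_iff hG).1 hf) ((iotInj_oPathRel_iff hG).1 hfi)
  · rintro ⟨μ, hμ⟩
    have hG : ∀ i : Fin (n + 1), pathColouring σ μ i = pathColouring σ μ i := fun _ => rfl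
    refine ⟨_, (isHom_oPathRel_iff hG).2 fun t ht => ?_, (iotInj_oPathRel_iff hG).2 fun v hv => ?_⟩
    · exact (followsMatching_pathColouring hμ ht).respectsArc
    · exact (followsMatching_pathColouring hμ (by omega)).ne_add_two
        (followsMatching_pathColouring hμ (by omega)) (hμ.2.1 v)
        (by simpa using hμ.2.2.1 (v + 1) (by omega) (by omega))

theorem iotHomEx_oCycRel_iff (hm : 3 ≤ m) :
    IotHomEx (OCycRel m σ) T2r ↔ 4 ∣ m ∧ ∃ μ, CycAltMatching m σ μ := by
  constructor
  · rintro ⟨f, hf, hfi⟩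
    let G : ℕ → Fin 2 := fun t => f ⟨t % m, Nat.mod_lt _ (by omega)⟩
    have hper : Function.Periodic G m := fun t => by simp [G]
    have hG : ∀ i, f i = G i := fun i => by simp [G, Nat.mod_eq_of_lt i.isLt]
    have hflip := (iotInj_oCycRel_iff hm hG hper).1 hfi
    exact ⟨four_dvd_of_periodic hper hflip,
      exists_cycAltMatching hper ((isHom_oCycRel_iff hG hper).1 hf) hflip⟩
  · rintro ⟨-, μ, hμ⟩
    have hG : ∀ i : Fin m, cycleColouring m σ μ i = cycleColouring m σ μ i := fun _ => rfl
    obtain ⟨hM, hS, hA⟩ := hμ.mod hm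
    have hrule := followsMatching_cycleColouring (by omega) hM hS hA
    refine ⟨_, (isHom_oCycRel_iff hG cycleColouring_periodic).2 fun t ht => ?_,
      (iotInj_oCycRel_iff hm hG cycleColouring_periodic).2 fun v => ?_⟩
    · simpa [RespectsArc, Nat.mod_eq_of_lt ht] using (hrule t).respectsArc
    · exact (hrule v).ne_add_two (hrule (v + 1)) (hM v) (hS v)

end OrientedPathsAndCycles

lemma exists_pathAltMatching_of_le_three {n : ℕ} (σ : ℕ → Bool) (hn : n + 1 ≤ 4) :
    ∃ μ, PathAltMatching n σ μ :=
  ⟨fun t => (n = 2 ∧ t = 0) ∨ (n = 3 ∧ t = 1), by refine ⟨?_, ?_, ?_, ?_⟩ <;> intros <;> omega⟩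

theorem componentRel_path_or_cycle {V : Type} [Finite V] {E : V → V → Prop} (hor : IsOriented E)
    (hirr : NoLoops E) (x : V) (hdeg : DegreeLeTwo (componentRel E x)) :
    (∃ n σ, IsoRel (OPathRel n σ) (componentRel E x)) ∨
      ∃ m σ, 3 ≤ m ∧ IsoRel (OCycRel m σ) (componentRel E x) :=
  haveI : Nonempty {y // UConn E x y} := ⟨⟨x, .refl⟩⟩
  path_or_cycle (fun a b hne => hor a b (hne ∘ Subtype.ext)) (fun a => hirr a) hdeg
    (uconn_componentRel x)

/-- A finite irreflexive oriented graph `G` has an iot-injective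
homomorphism to `T_2^r` iff each connected component of `G` is (a) an oriented path on
at most four vertices, or (b) an oriented path with an alternating matching, or (c) an
oriented cycle on `4k` vertices (`k ≥ 1`) with an alternating matching. -/
theorem stmt15 {V : Type} [Fintype V] (E : V → V → Prop)
    (hor : IsOriented E) (hirr : NoLoops E) :
    (∃ f : V → Fin 2, IsHom E T2r f ∧ IotInj E f) ↔
      ∀ x : V,
        (∃ (n : ℕ) (σ : ℕ → Bool), n + 1 ≤ 4 ∧ IsoRel (OPathRel n σ) (componentRel E x)) ∨
        (∃ (n : ℕ) (σ : ℕ → Bool) (μ : ℕ → Prop), PathAltMatching n σ μ ∧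
            IsoRel (OPathRel n σ) (componentRel E x)) ∨
        (∃ (k : ℕ) (σ : ℕ → Bool) (μ : ℕ → Prop), 1 ≤ k ∧ CycAltMatching (4 * k) σ μ ∧
            IsoRel (OCycRel (4 * k) σ) (componentRel E x)) := by
  change IotHomEx E T2r ↔ _
  constructor
  · intro hE x
    have hC := hE.of_subg (subg_componentRel E x)
    rcases componentRel_path_or_cycle hor hirr x hC.degreeLeTwo with
      ⟨n, σ, hiso⟩ | ⟨m, σ, hm, hiso⟩
    · obtain ⟨μ, hμ⟩ := iotHomEx_oPathRel_iff.1 (hC.of_isoRel hiso)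
      exact Or.inr (Or.inl ⟨n, σ, μ, hμ, hiso⟩)
    · obtain ⟨⟨k, rfl⟩, μ, hμ⟩ := (iotHomEx_oCycRel_iff hm).1 (hC.of_isoRel hiso)
      exact Or.inr (Or.inr ⟨k, σ, μ, by omega, hμ, hiso⟩)
  · intro h
    refine IotHomEx.of_forall_componentRel fun x => ?_
    rcases h x with ⟨n, σ, hn, hiso⟩ | ⟨n, σ, μ, hμ, hiso⟩ | ⟨k, σ, μ, hk, hμ, hiso⟩
    · exact (iotHomEx_oPathRel_iff.2 (exists_pathAltMatching_of_le_three σ hn)).of_isoRel hiso.symm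
    · exact (iotHomEx_oPathRel_iff.2 ⟨μ, hμ⟩).of_isoRel hiso.symm
    · exact ((iotHomEx_oCycRel_iff (by omega)).2 ⟨⟨k, rfl⟩, μ, hμ⟩).of_isoRel hiso.symm
end

section
/- A finite irreflexive oriented graph G has an iot-injective homomorphism to the reflexive tournament T_2^r if and only if no oriented graph F in S ∪ P has an iot-injective homomorphism to G, where S is the set of all orientations of the star K_{1,3} and P is the set of oriented paths with vertices v_0, v_1, ..., v_{2k} (k ≥ 2) such that the arcs among {v_1, ..., v_{2k-1}} form two disjoint alternating matchings, the arc joining v_0 and v_1 has the same orientation (with respect to the beginning and end of the path) as the arc joining v_2 and v_3, and the arc joining v_{2k-1} and v_{2k} has the same orientation as the arc joining v_{2k-3} and v_{2k-2}. -/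
/-!
An iot-injective homomorphism to `T_2^r` gives the neighbours of each vertex pairwise different
colours, so `G` has maximum degree two unless some orientation of `K_{1,3}` maps into it. A
longest path in a component then either closes up into a cycle or ends at vertices of degree one,
so every component is traversed by a non-backtracking walk. Along such a walk, positions at
distance two get different colours, so a colouring reads as one of the four period-four
`stripe`s; the edges whose ends get different colours form one parity class, and their
orientations must alternate. Hence, writing `σ` for the orientations of the edges of the walk, it
is colourable iff all positions `t` with `σ t = σ (t + 2)` have the same parity, and two such
positions of opposite parity with none in between span a path of `P` mapping into `G`. A cycle is
walked around twice: compatibility of the stripe with the orientation on both rounds forces the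
length of the cycle to be divisible by four, so the colouring is well defined.
-/

def stripe (off i : ℕ) : Fin 2 := ⟨(i + off) / 2 % 2, Nat.mod_lt _ two_pos⟩

@[simp] lemma stripe_val (off i : ℕ) : (stripe off i : ℕ) = (i + off) / 2 % 2 := rfl

lemma stripe_mod {m : ℕ} (hm : 4 ∣ m) (off i : ℕ) : stripe off (i % m) = stripe off i := by
  obtain ⟨q, rfl⟩ := hm
  have h := Nat.mod_add_div i (4 * q)
  generalize i / (4 * q) = a at h
  rw [mul_assoc] at h
  ext
  simp only [stripe_val]
  omega

lemma exists_eq_stripe {n : ℕ} {P : ℕ → Fin 2}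
    (h : ∀ i, i + 2 ≤ n → P i ≠ P (i + 2)) : ∃ off, ∀ i ≤ n, P i = stripe off i := by
  obtain ⟨off, h0, h1⟩ : ∃ off, P 0 = stripe off 0 ∧ P 1 = stripe off 1 :=
    ⟨if P 0 = 0 then P 1 else 3 - P 1, by split_ifs <;> constructor <;> ext <;> simp <;> omega⟩
  refine ⟨off, fun i => ?_⟩
  induction i using Nat.strong_induction_on with
  | _ i ih =>
    intro hi
    match i, ih with
    | 0, _ => exact h0
    | 1, _ => exact h1
    | i + 2, ih =>
      have hne := h i hi
      rw [ih i (by omega) (by omega)] at hne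
      ext
      simp only [ne_eq, Fin.ext_iff, stripe_val] at hne ⊢
      omega

/-- An iot-injective homomorphism to `T2r` of the oriented path `OPathRel n σ`, read off on the
positions `0, …, n`. -/
def IsPathColoring (n : ℕ) (σ : ℕ → Bool) (P : ℕ → Fin 2) : Prop :=
  (∀ i, i + 2 ≤ n → P i ≠ P (i + 2)) ∧
  (∀ i < n, σ i = true → P i ≤ P (i + 1)) ∧
  (∀ i < n, σ i = false → P (i + 1) ≤ P i)

namespace IsPathColoring

variable {n : ℕ} {σ : ℕ → Bool} {P Q : ℕ → Fin 2} {off : ℕ}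

lemma congr (hP : IsPathColoring n σ P) (hPQ : ∀ i ≤ n, P i = Q i) :
    IsPathColoring n σ Q := by
  refine ⟨fun i hi => ?_, fun i hi hσ => ?_, fun i hi hσ => ?_⟩
  · rw [← hPQ i (by omega), ← hPQ (i + 2) hi]; exact hP.1 i hi
  · rw [← hPQ i (by omega), ← hPQ (i + 1) hi]; exact hP.2.1 i hi hσ
  · rw [← hPQ i (by omega), ← hPQ (i + 1) hi]; exact hP.2.2 i hi hσ

lemma stripe_orient (hP : IsPathColoring n σ (stripe off)) {t : ℕ} (ht : t < n)
    (hodd : (t + off) % 2 = 1) : σ t = true ↔ stripe off t = 0 := by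
  cases hσ : σ t
  · have := hP.2.2 t ht hσ
    simp only [Fin.le_def, stripe_val] at this
    simp [Fin.ext_iff]
    omega
  · have := hP.2.1 t ht hσ
    simp only [Fin.le_def, stripe_val] at this
    simp [Fin.ext_iff]
    omega

lemma mod_two_eq_of_repeat (hP : IsPathColoring n σ P) {s t : ℕ} (hs : s + 3 ≤ n)
    (ht : t + 3 ≤ n) (hσs : σ s = σ (s + 2)) (hσt : σ t = σ (t + 2)) : s % 2 = t % 2 := by
  obtain ⟨off, hoff⟩ := exists_eq_stripe hP.1
  have hS := hP.congr hoff
  have hclass : ∀ r, r + 3 ≤ n → σ r = σ (r + 2) → (r + off) % 2 = 0 := by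
    intro r hr hσr
    by_contra hodd
    have h1 := hS.stripe_orient (t := r) (by omega) (by omega)
    have h2 := hS.stripe_orient (t := r + 2) (by omega) (by omega)
    rw [hσr, h2] at h1
    simp only [Fin.ext_iff, stripe_val] at h1
    omega
  have := hclass s hs hσs
  have := hclass t ht hσt
  omega

lemma four_dvd_of_periodic (hP : IsPathColoring n σ (stripe off)) {m : ℕ}
    (hσ : ∀ t, σ (t + m) = σ t) (hn : 2 * m + 2 ≤ n) : 4 ∣ m := by
  set t := (off + 1) % 2
  have hσ2 : σ (t + 2 * m) = σ t := by rw [two_mul, ← add_assoc, hσ, hσ]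
  have h0 := hP.stripe_orient (t := t) (by omega) (by omega)
  have h2 := hP.stripe_orient (t := t + 2 * m) (by omega) (by omega)
  rw [hσ2, h0] at h2
  simp only [Fin.ext_iff, stripe_val] at h2
  have hm : m % 2 = 0 := by omega
  have h1 := hP.stripe_orient (t := t + m) (by omega) (by omega)
  rw [hσ, h0] at h1
  simp only [Fin.ext_iff, stripe_val] at h1
  omega

end IsPathColoring

lemma exists_stripe_isPathColoring_of_mod_two_eq {n : ℕ} {σ : ℕ → Bool}
    (h : ∀ s t, s + 3 ≤ n → t + 3 ≤ n → σ s = σ (s + 2) → σ t = σ (t + 2) →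
      s % 2 = t % 2) :
    ∃ off, IsPathColoring n σ (stripe off) := by
  obtain ⟨c, hc1, hc⟩ :
      ∃ c ≤ 1, ∀ t, t + 3 ≤ n → t % 2 = c → σ t ≠ σ (t + 2) := by
    by_cases hr : ∃ r, r + 3 ≤ n ∧ σ r = σ (r + 2)
    · obtain ⟨r, hr, hσr⟩ := hr
      refine ⟨(r + 1) % 2, by omega, fun t ht htc hσt => ?_⟩
      have := h r t hr ht hσr hσt
      omega
    · push Not at hr
      exact ⟨0, by omega, fun t ht _ => hr t ht⟩
  -- the phase makes the arc at position `c` go from colour 0 to colour 1 exactly when `σ c`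
  obtain ⟨off, hoff⟩ : ∃ off, (c + off) % 4 = if σ c then 1 else 3 :=
    ⟨if σ c then 1 - c else 3 - c, by split <;> omega⟩
  have hodd : (c + off) % 2 = 1 := by split at hoff <;> omega
  have halign : ∀ t < n, (t + off) % 2 = 1 → (σ t = true ↔ stripe off t = 0) := by
    intro t
    induction t using Nat.strong_induction_on with
    | _ t ih =>
      intro ht htodd
      rcases lt_or_ge t 2 with h2 | h2
      · obtain rfl : t = c := by omega
        simp only [Fin.ext_iff, stripe_val, Fin.val_zero]
        split at hoff <;> simp_all <;> omega
      · have hprev := ih (t - 2) (by omega) (by omega) (by omega)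
        have hflip := hc (t - 2) (by omega) (by omega)
        rw [show t - 2 + 2 = t by omega] at hflip
        simp only [Fin.ext_iff, stripe_val, Fin.val_zero] at hprev ⊢
        cases hσ : σ t <;> cases hσ' : σ (t - 2) <;> simp_all <;> omega
  refine ⟨off, fun i _ => ?_, fun i hi hσ => ?_, fun i hi hσ => ?_⟩
  · simp only [ne_eq, Fin.ext_iff, stripe_val]; omega
  · rcases Nat.mod_two_eq_zero_or_one (i + off) with he | ho
    · simp only [Fin.le_def, stripe_val]; omega
    · have := (halign i hi ho).1 hσ
      simp only [Fin.le_def, Fin.ext_iff, stripe_val, Fin.val_zero] at this ⊢; omega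
  · rcases Nat.mod_two_eq_zero_or_one (i + off) with he | ho
    · simp only [Fin.le_def, stripe_val]; omega
    · have := (halign i hi ho).not.1 (by simp [hσ])
      simp only [Fin.le_def, Fin.ext_iff, stripe_val, Fin.val_zero] at this ⊢; omega

lemma exists_consecutive_of_odd_gap {R : ℕ → Prop} {s t : ℕ} (hs : R s) (ht : R t)
    (hst : s < t) (hodd : (t - s) % 2 = 1) :
    ∃ c j, s ≤ c ∧ c + 2 * j + 1 ≤ t ∧ R c ∧ R (c + 2 * j + 1) ∧
      ∀ r, c < r → r < c + 2 * j + 1 → ¬ R r := by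
  induction hg : t - s using Nat.strong_induction_on generalizing s t with
  | _ g ih =>
    by_cases hmid : ∃ r, s < r ∧ r < t ∧ R r
    · obtain ⟨r, hsr, hrt, hr⟩ := hmid
      rcases Nat.mod_two_eq_zero_or_one (r - s) with he | ho
      · obtain ⟨c, j, h⟩ := ih (t - r) (by omega) hr ht hrt (by omega) rfl
        exact ⟨c, j, by omega, h.2⟩
      · obtain ⟨c, j, h⟩ := ih (r - s) (by omega) hs hr hsr ho rfl
        exact ⟨c, j, h.1, by omega, h.2.2⟩
    · push Not at hmid
      refine ⟨s, (t - s) / 2, le_rfl, by omega, hs, ?_, fun r h1 h2 => hmid r h1 (by omega)⟩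
      rwa [show s + 2 * ((t - s) / 2) + 1 = t by omega]

section Graph

variable {V : Type} {E : V → V → Prop}

def nbhd (E : V → V → Prop) (x : V) : Set V := {y | E y x} ∪ {y | E x y}

lemma mem_nbhd_comm {x y : V} : y ∈ nbhd E x ↔ x ∈ nbhd E y := Or.comm

lemma ne_of_mem_nbhd (hirr : NoLoops E) {x y : V} (h : y ∈ nbhd E x) : y ≠ x := by
  rintro rfl
  exact h.elim (hirr y) (hirr y)

lemma IsHom.mapsTo_nbhd {A B : Type} {R : A → A → Prop} {S : B → B → Prop} {g : A → B}
    (hg : IsHom R S g) (x : A) : Set.MapsTo g (nbhd R x) (nbhd S (g x)) := by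
  rintro y (h | h)
  · exact Or.inl (hg _ _ h)
  · exact Or.inr (hg _ _ h)

lemma IsHom.comp {A B C : Type} {R : A → A → Prop} {S : B → B → Prop} {T : C → C → Prop}
    {g : A → B} {f : B → C} (hf : IsHom S T f) (hg : IsHom R S g) : IsHom R T (f ∘ g) :=
  fun x y h => hf _ _ (hg x y h)

lemma IotInj.comp {A B C : Type} {R : A → A → Prop} {S : B → B → Prop}
    {g : A → B} {f : B → C} (hf : IotInj S f) (hg : IsHom R S g) (hgi : IotInj R g) :
    IotInj R (f ∘ g) :=
  fun x => (hf (g x)).comp (hgi x) (hg.mapsTo_nbhd x)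

lemma starRel_nbhd {ε : Fin 3 → Bool} {o y : Option (Fin 3)} (h : y ∈ nbhd (starRel ε) o) :
    y = none ↔ o ≠ none := by
  rcases h with ⟨_, h | h⟩ | ⟨_, h | h⟩ <;> obtain ⟨-, rfl, rfl⟩ := h <;> simp

lemma not_iotInj_starRel_fin_two (ε : Fin 3 → Bool) (h : Option (Fin 3) → Fin 2) :
    ¬ IotInj (starRel ε) h := by
  intro hinj
  have hleaf : ∀ i, some i ∈ nbhd (starRel ε) none := by
    intro i
    cases hε : ε i
    · exact Or.inl ⟨i, Or.inr ⟨hε, rfl, rfl⟩⟩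
    · exact Or.inr ⟨i, Or.inl ⟨hε, rfl, rfl⟩⟩
  have : Function.Injective (h ∘ some) := fun i j hij =>
    Option.some_injective _ (hinj none (hleaf i) (hleaf j) hij)
  simpa using Fintype.card_le_of_injective _ this

lemma exists_iotHomEx_starRel {x a b c : V} (ha : a ∈ nbhd E x) (hb : b ∈ nbhd E x)
    (hc : c ∈ nbhd E x) (hab : a ≠ b) (hac : a ≠ c) (hbc : b ≠ c) :
    ∃ ε, IotHomEx (starRel ε) E := by
  classical
  set l : Fin 3 → V := ![a, b, c]
  have hl : ∀ i, l i ∈ nbhd E x := by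
    intro i; fin_cases i <;> assumption
  have hlinj : Function.Injective l := by
    intro i j hij
    fin_cases i <;> fin_cases j <;> simp_all [l, eq_comm]
  refine ⟨fun i => decide (E x (l i)), fun o => o.elim x l, ?_, ?_⟩
  · rintro _ _ ⟨i, ⟨hε, rfl, rfl⟩ | ⟨hε, rfl, rfl⟩⟩
    · exact of_decide_eq_true hε
    · exact (hl i).resolve_right (of_decide_eq_false hε)
  · intro o y hy z hz hyz
    cases o with
    | none =>
      obtain ⟨i, rfl⟩ := Option.ne_none_iff_exists'.mp ((starRel_nbhd hy).not.mpr (by simp))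
      obtain ⟨j, rfl⟩ := Option.ne_none_iff_exists'.mp ((starRel_nbhd hz).not.mpr (by simp))
      exact congrArg some (hlinj hyz)
    | some i =>
      rw [(starRel_nbhd hy).mpr (by simp), (starRel_nbhd hz).mpr (by simp)]

def MaxDegTwo (E : V → V → Prop) : Prop :=
  ∀ x, ∀ a ∈ nbhd E x, ∀ b ∈ nbhd E x, ∀ c ∈ nbhd E x, a = b ∨ a = c ∨ b = c

lemma maxDegTwo_of_not_star (h : ¬ ∃ ε, IotHomEx (starRel ε) E) : MaxDegTwo E := by
  intro x a ha b hb c hc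
  by_contra! hne
  exact h (exists_iotHomEx_starRel ha hb hc hne.1 hne.2.1 hne.2.2)

def IsNonbacktrackingWalk (E : V → V → Prop) (n : ℕ) (w : ℕ → V) : Prop :=
  (∀ i < n, w (i + 1) ∈ nbhd E (w i)) ∧ ∀ i, i + 2 ≤ n → w i ≠ w (i + 2)

open Classical in
noncomputable def walkOrient (E : V → V → Prop) (w : ℕ → V) (i : ℕ) : Bool :=
  decide (E (w i) (w (i + 1)))

lemma walkOrient_eq_true {w : ℕ → V} {i : ℕ} :
    walkOrient E w i = true ↔ E (w i) (w (i + 1)) := by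
  simp [walkOrient]

lemma walkOrient_eq_false (hor : IsOriented E) (hirr : NoLoops E) {w : ℕ → V} {i : ℕ}
    (h : E (w (i + 1)) (w i)) : walkOrient E w i = false := by
  rw [walkOrient, decide_eq_false_iff_not]
  exact fun h' => hor _ _ (ne_of_mem_nbhd hirr (Or.inr h)) ⟨h', h⟩

def ExistsPPathIotHom (E : V → V → Prop) : Prop :=
  ∃ (k : ℕ) (σ : ℕ → Bool), 2 ≤ k ∧
    σ 0 = σ 2 ∧ σ (2 * k - 1) = σ (2 * k - 3) ∧
    (∀ t, 1 ≤ t → t + 2 ≤ 2 * k - 2 → σ t ≠ σ (t + 2)) ∧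
    IotHomEx (OPathRel (2 * k) σ) E

lemma oPathRel_val {n : ℕ} {σ : ℕ → Bool} {x y : Fin (n + 1)} (h : OPathRel n σ x y) :
    (y : ℕ) = x + 1 ∨ (x : ℕ) = y + 1 := by
  obtain ⟨t, -, ⟨-, hx, hy⟩ | ⟨-, hx, hy⟩⟩ := h <;> omega

namespace IsNonbacktrackingWalk

variable {n : ℕ} {w : ℕ → V}

lemma iotHomEx (hw : IsNonbacktrackingWalk E n w) :
    IotHomEx (OPathRel n (walkOrient E w)) E := by
  refine ⟨fun x => w x, ?_, ?_⟩
  · rintro x y ⟨t, ht, ⟨hσ, hx, hy⟩ | ⟨hσ, hx, hy⟩⟩ <;> simp only [hx, hy]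
    · exact walkOrient_eq_true.mp hσ
    · exact (hw.1 t ht).resolve_right (walkOrient_eq_true.not.mp (by simp [hσ]))
  · intro x y hy z hz hyz
    have hy' : (x : ℕ) = y + 1 ∨ (y : ℕ) = x + 1 :=
      hy.elim oPathRel_val (oPathRel_val · |>.symm)
    have hz' : (x : ℕ) = z + 1 ∨ (z : ℕ) = x + 1 :=
      hz.elim oPathRel_val (oPathRel_val · |>.symm)
    simp only at hyz
    ext
    rcases hy' with hy' | hy' <;> rcases hz' with hz' | hz'
    · omega
    · exact absurd (by rwa [show (z : ℕ) = y + 2 by omega] at hyz) (hw.2 y (by omega))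
    · exact absurd (by rwa [show (y : ℕ) = z + 2 by omega] at hyz) (hw.2 z (by omega)).symm
    · omega

lemma shift {c m : ℕ} (hw : IsNonbacktrackingWalk E n w) (h : c + m ≤ n) :
    IsNonbacktrackingWalk E m (fun i => w (c + i)) :=
  ⟨fun i hi => hw.1 (c + i) (by omega), fun i hi => hw.2 (c + i) (by omega)⟩

lemma existsPPathIotHom {c j : ℕ} (hw : IsNonbacktrackingWalk E n w) (hn : c + 2 * j + 4 ≤ n)
    (h0 : walkOrient E w c = walkOrient E w (c + 2))
    (h1 : walkOrient E w (c + 2 * j + 1) = walkOrient E w (c + 2 * j + 3))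
    (hmid : ∀ r, c < r → r < c + 2 * j + 1 → walkOrient E w r ≠ walkOrient E w (r + 2)) :
    ExistsPPathIotHom E :=
  ⟨j + 2, walkOrient E (fun i => w (c + i)), by omega, h0,
    by rw [show 2 * (j + 2) - 1 = 2 * j + 3 by omega, show 2 * (j + 2) - 3 = 2 * j + 1 by omega]
       exact h1.symm,
    fun t ht1 ht2 => hmid (c + t) (by omega) (by omega),
    (hw.shift (by omega)).iotHomEx⟩

lemma mod_two_eq_of_repeat (hnb : ¬ ExistsPPathIotHom E) (hw : IsNonbacktrackingWalk E n w)
    {s t : ℕ} (hs : s + 3 ≤ n) (ht : t + 3 ≤ n)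
    (hσs : walkOrient E w s = walkOrient E w (s + 2))
    (hσt : walkOrient E w t = walkOrient E w (t + 2)) : s % 2 = t % 2 := by
  by_contra hodd
  wlog hst : s < t generalizing s t
  · exact this ht hs hσt hσs (by omega) (by omega)
  obtain ⟨c, j, hsc, hct, hc, hcj, hmid⟩ :=
    exists_consecutive_of_odd_gap (R := fun r => walkOrient E w r = walkOrient E w (r + 2))
      hσs hσt hst (by omega)
  exact hnb (hw.existsPPathIotHom (by omega) hc hcj hmid)

lemma exists_stripe_isPathColoring (hnb : ¬ ExistsPPathIotHom E)
    (hw : IsNonbacktrackingWalk E n w) : ∃ off, IsPathColoring n (walkOrient E w) (stripe off) :=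
  exists_stripe_isPathColoring_of_mod_two_eq fun _ _ hs ht hσs hσt =>
    hw.mod_two_eq_of_repeat hnb hs ht hσs hσt

lemma eq_of_mem_nbhd (hdeg : MaxDegTwo E) (hw : IsNonbacktrackingWalk E n w) {i : ℕ}
    (hi1 : 1 ≤ i) (hin : i < n) {y : V} (hy : y ∈ nbhd E (w i)) :
    y = w (i - 1) ∨ y = w (i + 1) := by
  have hprev : w (i - 1) ∈ nbhd E (w i) := by
    have := hw.1 (i - 1) (by omega)
    rwa [Nat.sub_add_cancel hi1, mem_nbhd_comm] at this
  have hne : w (i - 1) ≠ w (i + 1) := by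
    have := hw.2 (i - 1) (by omega)
    rwa [show i - 1 + 2 = i + 1 by omega] at this
  rcases hdeg _ y hy _ hprev _ (hw.1 i hin) with h | h | h
  · exact Or.inl h
  · exact Or.inr h
  · exact absurd h hne

end IsNonbacktrackingWalk

def IsNbhdClosed (E : V → V → Prop) (S : Set V) : Prop := ∀ x ∈ S, nbhd E x ⊆ S

def IsIotT2rHomOn (E : V → V → Prop) (S : Set V) (f : V → Fin 2) : Prop :=
  ∀ x ∈ S, (∀ y, E x y → f x ≤ f y) ∧ Set.InjOn f (nbhd E x)

lemma IsIotT2rHomOn.piecewise {S I : Set V} [DecidablePred (· ∈ I)] {f g : V → Fin 2}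
    (hf : IsIotT2rHomOn E I f) (hI : IsNbhdClosed E I) (hg : IsIotT2rHomOn E (S \ I) g) :
    IsIotT2rHomOn E S (I.piecewise f g) := by
  intro x hx
  by_cases hxI : x ∈ I
  · have hN := hI x hxI
    refine ⟨fun y hy => ?_, ?_⟩
    · rw [Set.piecewise_eq_of_mem _ _ _ hxI, Set.piecewise_eq_of_mem _ _ _ (hN (Or.inr hy))]
      exact (hf x hxI).1 y hy
    · exact (hf x hxI).2.congr fun y hy => (Set.piecewise_eq_of_mem _ _ _ (hN hy)).symm
  · have hN : ∀ y ∈ nbhd E x, y ∉ I := fun y hy hyI => hxI (hI y hyI (mem_nbhd_comm.mp hy))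
    refine ⟨fun y hy => ?_, ?_⟩
    · rw [Set.piecewise_eq_of_notMem _ _ _ hxI,
        Set.piecewise_eq_of_notMem _ _ _ (hN y (Or.inr hy))]
      exact (hg x ⟨hx, hxI⟩).1 y hy
    · exact (hg x ⟨hx, hxI⟩).2.congr fun y hy =>
        (Set.piecewise_eq_of_notMem _ _ _ (hN y hy)).symm

def CoversNbhds (E : V → V → Prop) (n : ℕ) (w : ℕ → V) : Prop :=
  ∀ i ≤ n, ∃ j ≤ n, w j = w i ∧
    ∀ y ∈ nbhd E (w j), (1 ≤ j ∧ y = w (j - 1)) ∨ (j < n ∧ y = w (j + 1))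

namespace CoversNbhds

variable {n : ℕ} {w : ℕ → V}

lemma isNbhdClosed (hcov : CoversNbhds E n w) : IsNbhdClosed E {x | ∃ i ≤ n, w i = x} := by
  rintro _ ⟨i, hi, rfl⟩ y hy
  obtain ⟨j, hj, hji, hN⟩ := hcov i hi
  rw [← hji] at hy
  rcases hN y hy with ⟨h1, rfl⟩ | ⟨h1, rfl⟩
  · exact ⟨j - 1, by omega, rfl⟩
  · exact ⟨j + 1, by omega, rfl⟩

lemma exists_iotT2rHomOn (hor : IsOriented E) (hirr : NoLoops E) (hcov : CoversNbhds E n w)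
    {P : ℕ → Fin 2} (hP : IsPathColoring n (walkOrient E w) P)
    (hwd : ∀ i ≤ n, ∀ j ≤ n, w i = w j → P i = P j) :
    ∃ f, IsIotT2rHomOn E {x | ∃ i ≤ n, w i = x} f := by
  classical
  set f : V → Fin 2 := fun y => if h : ∃ i ≤ n, w i = y then P h.choose else 0
  have hf : ∀ i ≤ n, f (w i) = P i := by
    intro i hi
    have h : ∃ j ≤ n, w j = w i := ⟨i, hi, rfl⟩
    simp only [f, dif_pos h]
    exact hwd _ h.choose_spec.1 _ hi h.choose_spec.2
  refine ⟨f, ?_⟩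
  rintro _ ⟨i, hi, rfl⟩
  obtain ⟨j, hj, hji, hN⟩ := hcov i hi
  rw [← hji]
  refine ⟨fun y hy => ?_, fun y hy z hz hyz => ?_⟩
  · rcases hN y (Or.inr hy) with ⟨h1, rfl⟩ | ⟨h1, rfl⟩
    · have hσ := walkOrient_eq_false hor hirr (w := w) (i := j - 1)
        (by rwa [Nat.sub_add_cancel h1])
      have := hP.2.2 (j - 1) (by omega) hσ
      rwa [Nat.sub_add_cancel h1, ← hf j hj, ← hf (j - 1) (by omega)] at this
    · rw [hf j hj, hf (j + 1) (by omega)]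
      exact hP.2.1 j h1 (walkOrient_eq_true.mpr hy)
  · have hflip : f (w (j - 1)) ≠ f (w (j + 1)) ∨ ¬ (1 ≤ j ∧ j < n) := by
      by_cases h : 1 ≤ j ∧ j < n
      · left
        rw [hf _ (by omega), hf _ (by omega)]
        simpa [show j - 1 + 2 = j + 1 by omega] using hP.1 (j - 1) (by omega)
      · exact Or.inr h
    rcases hN y hy with ⟨hy1, rfl⟩ | ⟨hy1, rfl⟩ <;>
      rcases hN z hz with ⟨hz1, rfl⟩ | ⟨hz1, rfl⟩
    · rfl
    · exact absurd hyz (hflip.resolve_right (by omega))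
    · exact absurd hyz.symm (hflip.resolve_right (by omega))
    · rfl

end CoversNbhds

def IsPathIn (E : V → V → Prop) (S : Set V) (n : ℕ) (u : ℕ → V) : Prop :=
  (∀ i ≤ n, u i ∈ S) ∧ (∀ i < n, u (i + 1) ∈ nbhd E (u i)) ∧
    ∀ i ≤ n, ∀ j ≤ n, u i = u j → i = j

lemma exists_longest_pathIn [Fintype V] {S : Set V} {x : V} (hx : x ∈ S) :
    ∃ n u, IsPathIn E S n u ∧ ∀ n' u', IsPathIn E S n' u' → n' ≤ n := by
  classical
  have hlt : ∀ {n u}, IsPathIn E S n u → n < Fintype.card V := fun {n u} hu => by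
    have hinj : Function.Injective fun i : Fin (n + 1) => u i :=
      fun i j h => Fin.ext (hu.2.2 i (by omega) j (by omega) h)
    simpa using Fintype.card_le_of_injective _ hinj
  let Q : ℕ → Prop := fun n => ∃ u, IsPathIn E S n u
  have hQ0 : Q 0 := ⟨fun _ => x, fun _ _ => hx, fun _ h => absurd h (by omega),
    fun i hi j hj _ => by omega⟩
  obtain ⟨u, hu⟩ := Nat.findGreatest_spec (Nat.zero_le (Fintype.card V)) hQ0
  exact ⟨_, u, hu, fun n' u' hu' => Nat.le_findGreatest (hlt hu').le ⟨u', hu'⟩⟩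

lemma add_mod_cases {i k m : ℕ} (hk : k < m) :
    (i + k) % m = i % m + k ∨ (i + k) % m + m = i % m + k := by
  rw [Nat.add_mod_eq_ite, Nat.mod_eq_of_lt hk]
  split <;> omega

namespace IsPathIn

variable {S : Set V} {n : ℕ} {u : ℕ → V}

lemma isNonbacktrackingWalk (hu : IsPathIn E S n u) : IsNonbacktrackingWalk E n u :=
  ⟨hu.2.1, fun i hi h => by have := hu.2.2 i (by omega) (i + 2) hi h; omega⟩

lemma reverse (hu : IsPathIn E S n u) : IsPathIn E S n (fun i => u (n - i)) := by
  refine ⟨fun i _ => hu.1 _ (by omega), fun i hi => ?_, fun i hi j hj h => ?_⟩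
  · have := hu.2.1 (n - (i + 1)) (by omega)
    rwa [show n - (i + 1) + 1 = n - i by omega, mem_nbhd_comm] at this
  · have := hu.2.2 _ (by omega) _ (by omega) h
    omega

lemma snoc (hu : IsPathIn E S n u) {z : V} (hzS : z ∈ S) (hz : z ∈ nbhd E (u n))
    (hnew : ∀ j ≤ n, u j ≠ z) :
    IsPathIn E S (n + 1) (fun i => if i ≤ n then u i else z) := by
  refine ⟨fun i _ => ?_, fun i hi => ?_, fun i hi j hj h => ?_⟩
  · dsimp only
    split_ifs
    · exact hu.1 i (by omega)
    · exact hzS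
  · by_cases hin : i < n
    · simp only [if_pos hin.le, if_pos (show i + 1 ≤ n by omega)]
      exact hu.2.1 i hin
    · obtain rfl : i = n := by omega
      simpa using hz
  · simp only at h
    split_ifs at h with h1 h2 h2
    · exact hu.2.2 i h1 j h2 h
    · exact absurd h (hnew i h1)
    · exact absurd h.symm (hnew j h2)
    · omega

lemma eq_of_mem_nbhd_last (hirr : NoLoops E) (hdeg : MaxDegTwo E) (hS : IsNbhdClosed E S)
    (hu : IsPathIn E S n u) (hmax : ∀ n' u', IsPathIn E S n' u' → n' ≤ n) {z : V}
    (hz : z ∈ nbhd E (u n)) : (1 ≤ n ∧ z = u (n - 1)) ∨ (2 ≤ n ∧ z = u 0) := by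
  by_cases hold : ∃ j ≤ n, u j = z
  · obtain ⟨j, hj, rfl⟩ := hold
    have hjn : j ≠ n := fun h => ne_of_mem_nbhd hirr hz (by rw [h])
    by_cases hj1 : j = n - 1
    · exact Or.inl ⟨by omega, by rw [hj1]⟩
    by_cases hj0 : j = 0
    · exact Or.inr ⟨by omega, by rw [hj0]⟩
    exfalso
    rcases hu.isNonbacktrackingWalk.eq_of_mem_nbhd hdeg (i := j) (by omega) (by omega)
      (mem_nbhd_comm.mp hz) with h | h
    · have := hu.2.2 _ le_rfl _ (by omega) h; omega
    · have := hu.2.2 _ le_rfl _ (by omega) h; omega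
  · push Not at hold
    have := hmax _ _ (hu.snoc (hS _ (hu.1 n le_rfl) hz) hz hold)
    omega

lemma coversNbhds (hirr : NoLoops E) (hdeg : MaxDegTwo E) (hS : IsNbhdClosed E S)
    (hu : IsPathIn E S n u) (hmax : ∀ n' u', IsPathIn E S n' u' → n' ≤ n)
    (hopen : ¬ (2 ≤ n ∧ u 0 ∈ nbhd E (u n))) : CoversNbhds E n u := by
  intro i hi
  refine ⟨i, hi, rfl, fun y hy => ?_⟩
  rcases Nat.lt_or_ge i n with hin | hin
  · rcases Nat.eq_zero_or_pos i with rfl | hi0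
    · have := hu.reverse.eq_of_mem_nbhd_last hirr hdeg hS hmax (z := y) (by simpa using hy)
      simp only [Nat.sub_sub_self (show 1 ≤ n by omega), Nat.sub_zero] at this
      rcases this with ⟨-, rfl⟩ | ⟨h2, rfl⟩
      · exact Or.inr ⟨hin, rfl⟩
      · exact absurd ⟨h2, mem_nbhd_comm.mp hy⟩ hopen
    · rcases hu.isNonbacktrackingWalk.eq_of_mem_nbhd hdeg hi0 hin hy with rfl | rfl
      · exact Or.inl ⟨hi0, rfl⟩
      · exact Or.inr ⟨hin, rfl⟩
  · obtain rfl : i = n := by omega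
    rcases hu.eq_of_mem_nbhd_last hirr hdeg hS hmax hy with h | ⟨h2, rfl⟩
    · exact Or.inl h
    · exact absurd ⟨h2, hy⟩ hopen

lemma cycle_isNonbacktrackingWalk (hu : IsPathIn E S n u) (hn : 2 ≤ n)
    (hclose : u 0 ∈ nbhd E (u n)) (N : ℕ) :
    IsNonbacktrackingWalk E N (fun i => u (i % (n + 1))) := by
  refine ⟨fun i _ => ?_, fun i _ h => ?_⟩
  · dsimp only
    have := Nat.mod_lt i (show 0 < n + 1 by omega)
    have := Nat.mod_lt (i + 1) (show 0 < n + 1 by omega)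
    rcases add_mod_cases (i := i) (show 1 < n + 1 by omega) with h | h
    · rw [h]
      exact hu.2.1 _ (by omega)
    · rw [show (i + 1) % (n + 1) = 0 by omega, show i % (n + 1) = n by omega]
      exact hclose
  · have := Nat.mod_lt i (show 0 < n + 1 by omega)
    have := Nat.mod_lt (i + 2) (show 0 < n + 1 by omega)
    have := hu.2.2 _ (by omega) _ (by omega) h
    rcases add_mod_cases (i := i) (show 2 < n + 1 by omega) with h | h <;> omega

lemma cycle_coversNbhds (hdeg : MaxDegTwo E) (hu : IsPathIn E S n u) (hn : 2 ≤ n)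
    (hclose : u 0 ∈ nbhd E (u n)) :
    CoversNbhds E (2 * (n + 1) + 2) (fun i => u (i % (n + 1))) := by
  intro i _
  have := Nat.mod_lt i (show 0 < n + 1 by omega)
  refine ⟨i % (n + 1) + (n + 1), by omega, by simp, fun y hy => ?_⟩
  rcases (hu.cycle_isNonbacktrackingWalk hn hclose (2 * (n + 1) + 2)).eq_of_mem_nbhd hdeg
    (i := i % (n + 1) + (n + 1)) (by omega) (by omega) hy with h | h
  · exact Or.inl ⟨by omega, h⟩
  · exact Or.inr ⟨by omega, h⟩

lemma cycle_stripe_eq (hu : IsPathIn E S n u) {off : ℕ}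
    (hP : IsPathColoring (2 * (n + 1) + 2) (walkOrient E fun i => u (i % (n + 1))) (stripe off))
    {i j : ℕ} (h : u (i % (n + 1)) = u (j % (n + 1))) : stripe off i = stripe off j := by
  have h4 := hP.four_dvd_of_periodic (m := n + 1) (fun t => by
    simp [walkOrient, show t + (n + 1) + 1 = t + 1 + (n + 1) by ring]) (by omega)
  have := hu.2.2 _ (Nat.lt_succ_iff.mp (Nat.mod_lt i (by omega))) _
    (Nat.lt_succ_iff.mp (Nat.mod_lt j (by omega))) h
  rw [← stripe_mod h4 off i, ← stripe_mod h4 off j, this]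

end IsPathIn

lemma exists_iotT2rHomOn_component [Fintype V] (hor : IsOriented E) (hirr : NoLoops E)
    (hdeg : MaxDegTwo E) (hnb : ¬ ExistsPPathIotHom E) {S : Set V} (hS : IsNbhdClosed E S)
    {x : V} (hx : x ∈ S) :
    ∃ I ⊆ S, I.Nonempty ∧ IsNbhdClosed E I ∧ ∃ f, IsIotT2rHomOn E I f := by
  obtain ⟨n, u, hu, hmax⟩ := exists_longest_pathIn (E := E) hx
  suffices ∃ N w, IsNonbacktrackingWalk E N w ∧ (∀ i ≤ N, w i ∈ S) ∧
      CoversNbhds E N w ∧ ∀ off, IsPathColoring N (walkOrient E w) (stripe off) →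
        ∀ i ≤ N, ∀ j ≤ N, w i = w j → stripe off i = stripe off j by
    obtain ⟨N, w, hw, hwS, hcov, hwd⟩ := this
    obtain ⟨off, hP⟩ := hw.exists_stripe_isPathColoring hnb
    refine ⟨{x | ∃ i ≤ N, w i = x}, ?_, ⟨w 0, 0, Nat.zero_le N, rfl⟩, hcov.isNbhdClosed,
      hcov.exists_iotT2rHomOn hor hirr hP (hwd off hP)⟩
    rintro _ ⟨i, hi, rfl⟩
    exact hwS i hi
  by_cases hcyc : 2 ≤ n ∧ u 0 ∈ nbhd E (u n)
  · exact ⟨_, _, hu.cycle_isNonbacktrackingWalk hcyc.1 hcyc.2 _,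
      fun i _ => hu.1 _ (Nat.lt_succ_iff.mp (Nat.mod_lt i (by omega))),
      hu.cycle_coversNbhds hdeg hcyc.1 hcyc.2, fun off hP _ _ _ _ h => hu.cycle_stripe_eq hP h⟩
  · exact ⟨n, u, hu.isNonbacktrackingWalk, hu.1, hu.coversNbhds hirr hdeg hS hmax hcyc,
      fun off _ i hi j hj h => by rw [hu.2.2 i hi j hj h]⟩

lemma exists_iotT2rHomOn [Fintype V] (hor : IsOriented E) (hirr : NoLoops E)
    (hdeg : MaxDegTwo E) (hnb : ¬ ExistsPPathIotHom E) (S : Set V) (hS : IsNbhdClosed E S) :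
    ∃ f, IsIotT2rHomOn E S f := by
  classical
  induction hc : S.ncard using Nat.strong_induction_on generalizing S with
  | _ c ih =>
    rcases S.eq_empty_or_nonempty with rfl | ⟨x, hx⟩
    · exact ⟨0, fun _ h => h.elim⟩
    obtain ⟨I, hIS, ⟨y, hy⟩, hI, f, hf⟩ :=
      exists_iotT2rHomOn_component hor hirr hdeg hnb hS hx
    have hSI : IsNbhdClosed E (S \ I) := fun z hz v hv =>
      ⟨hS z hz.1 hv, fun hvI => hz.2 (hI v hvI (mem_nbhd_comm.mp hv))⟩
    have hlt : (S \ I).ncard < c :=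
      hc ▸ Set.ncard_lt_ncard (Set.sdiff_ssubset_left_iff.mpr ⟨y, hIS hy, hy⟩)
    obtain ⟨g, hg⟩ := ih _ hlt (S \ I) hSI rfl
    exact ⟨I.piecewise f g, hf.piecewise hI hg⟩

end Graph

lemma oPathRel_clamp {n : ℕ} {σ : ℕ → Bool} {i : ℕ} (hi : i < n) :
    if σ i then OPathRel n σ (Fin.clamp i n) (Fin.clamp (i + 1) n)
    else OPathRel n σ (Fin.clamp (i + 1) n) (Fin.clamp i n) := by
  have h1 := Fin.coe_clamp i n
  have h2 := Fin.coe_clamp (i + 1) n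
  cases hσ : σ i
  · exact ⟨i, hi, Or.inr ⟨hσ, by omega, by omega⟩⟩
  · exact ⟨i, hi, Or.inl ⟨hσ, by omega, by omega⟩⟩

lemma isPathColoring_of_iotHom {n : ℕ} {σ : ℕ → Bool} {g : Fin (n + 1) → Fin 2}
    (hg : IsHom (OPathRel n σ) T2r g) (hgi : IotInj (OPathRel n σ) g) :
    IsPathColoring n σ (fun i => g (Fin.clamp i n)) := by
  have hnbhd : ∀ i < n, Fin.clamp (i + 1) n ∈ nbhd (OPathRel n σ) (Fin.clamp i n) ∧
      Fin.clamp i n ∈ nbhd (OPathRel n σ) (Fin.clamp (i + 1) n) := by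
    intro i hi
    have := oPathRel_clamp (σ := σ) hi
    split at this
    · exact ⟨Or.inr this, Or.inl this⟩
    · exact ⟨Or.inl this, Or.inr this⟩
  refine ⟨fun i hi h => ?_, fun i hi hσ => ?_, fun i hi hσ => ?_⟩
  · have := congrArg Fin.val (hgi _ (hnbhd i (by omega)).2 (hnbhd (i + 1) hi).1 h)
    simp only [Fin.coe_clamp] at this
    omega
  all_goals
    have h := oPathRel_clamp (σ := σ) hi
    simp only [hσ, if_true, Bool.false_eq_true, if_false] at h
    exact hg _ _ h

/-- A finite irreflexive oriented graph `G` has an iot-injective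
homomorphism to `T_2^r` iff no oriented graph in `S ∪ P` has an iot-injective
homomorphism to `G`, where `S` consists of all orientations of `K_{1,3}` and `P`
consists of the oriented paths `v_0 … v_{2k}` (`k ≥ 2`) whose arcs among
`{v_1,…,v_{2k-1}}` form two disjoint alternating matchings, with the arc joining
`v_0,v_1` oriented like the arc joining `v_2,v_3` and the arc joining
`v_{2k-1},v_{2k}` oriented like the arc joining `v_{2k-3},v_{2k-2}`. -/
theorem stmt16 {V : Type} [Fintype V] (E : V → V → Prop)
    (hor : IsOriented E) (hirr : NoLoops E) :
    (∃ f : V → Fin 2, IsHom E T2r f ∧ IotInj E f) ↔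
      ¬ ((∃ ε : Fin 3 → Bool, IotHomEx (starRel ε) E) ∨
          (∃ (k : ℕ) (σ : ℕ → Bool), 2 ≤ k ∧
            σ 0 = σ 2 ∧ σ (2 * k - 1) = σ (2 * k - 3) ∧
            (∀ t, 1 ≤ t → t + 2 ≤ 2 * k - 2 → σ t ≠ σ (t + 2)) ∧
            IotHomEx (OPathRel (2 * k) σ) E)) := by
  constructor
  · rintro ⟨f, hf, hfi⟩ (⟨ε, g, hg, hgi⟩ | ⟨k, σ, hk, h02, hend, -, g, hg, hgi⟩)
    · exact not_iotInj_starRel_fin_two ε _ (hfi.comp hg hgi)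
    · have hP := isPathColoring_of_iotHom (hf.comp hg) (hfi.comp hg hgi)
      have := hP.mod_two_eq_of_repeat (s := 0) (t := 2 * k - 3) (by omega) (by omega) h02
        (by rw [show 2 * k - 3 + 2 = 2 * k - 1 by omega, hend])
      omega
  · intro hno
    obtain ⟨f, hf⟩ := exists_iotT2rHomOn hor hirr (maxDegTwo_of_not_star (hno <| .inl ·))
      (hno <| .inr ·) Set.univ fun _ _ _ _ => trivial
    exact ⟨f, fun x y h => (hf x trivial).1 y h, fun x => (hf x trivial).2⟩
end

section
/- If an oriented cycle C has an iot-injective homomorphism to the reflexive tournament T_2^r, then the number of vertices of C is divisible by 4. -/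
/-- if an oriented cycle has an iot-injective homomorphism to the
reflexive tournament `T_2^r`, then its number of vertices is divisible by 4. -/
theorem stmt17 (m : ℕ) (hm : 3 ≤ m) (σ : ℕ → Bool)
    (h : IotHomEx (OCycRel m σ) T2r) : 4 ∣ m := by
  obtain ⟨f, -, hinj⟩ := h
  have hm0 : 0 < m := by omega
  set V : ℕ → Fin m := fun i => ⟨i % m, Nat.mod_lt _ hm0⟩ with hV
  have hedge1 : ∀ i, V i ∈ ({y | OCycRel m σ y (V (i+1))} ∪ {y | OCycRel m σ (V (i+1)) y}) := by
    intro i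
    cases hb : σ (i % m) with
    | true =>
        left
        exact ⟨i % m, Nat.mod_lt _ hm0, Or.inl ⟨hb, rfl, by simp [hV, Nat.mod_add_mod]⟩⟩
    | false =>
        right
        exact ⟨i % m, Nat.mod_lt _ hm0, Or.inr ⟨hb, by simp [hV, Nat.mod_add_mod], rfl⟩⟩
  have hedge2 : ∀ i, V (i+2) ∈ ({y | OCycRel m σ y (V (i+1))} ∪ {y | OCycRel m σ (V (i+1)) y}) := by
    intro i
    cases hb : σ ((i+1) % m) with
    | true =>
        right
        refine ⟨(i+1) % m, Nat.mod_lt _ hm0, Or.inl ⟨hb, rfl, ?_⟩⟩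
        show (i+2) % m = ((i+1) % m + 1) % m
        rw [Nat.mod_add_mod]
    | false =>
        left
        refine ⟨(i+1) % m, Nat.mod_lt _ hm0, Or.inr ⟨hb, ?_, rfl⟩⟩
        show (i+2) % m = ((i+1) % m + 1) % m
        rw [Nat.mod_add_mod]
  have hne2 : ∀ a, a < m → a ≠ (a + 2) % m := by
    intro a ha
    rcases lt_or_ge (a+2) m with h1 | h1
    · rw [Nat.mod_eq_of_lt h1]; omega
    · have h2 : (a+2) % m = a + 2 - m := by
        rw [Nat.mod_eq_sub_mod h1, Nat.mod_eq_of_lt (by omega)]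
      omega
  have key : ∀ i, f (V (i+2)) ≠ f (V i) := by
    intro i heq
    have hEq := hinj (V (i+1)) (hedge2 i) (hedge1 i) heq
    have hv : (i+2) % m = i % m := congrArg Fin.val hEq
    have h3 := hne2 (i % m) (Nat.mod_lt _ hm0)
    rw [Nat.mod_add_mod] at h3
    exact h3 hv.symm
  have fin2 : ∀ a b c : Fin 2, a ≠ b → c ≠ b → a = c := by decide
  have main : ∀ k, (Even k → f (V (2*k)) = f (V 0)) ∧ (¬ Even k → f (V (2*k)) ≠ f (V 0)) := by
    intro k
    induction k with
    | zero => simp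
    | succ k ih =>
      have hk := key (2*k)
      have h2 : 2*(k+1) = 2*k+2 := by ring
      rw [h2]
      constructor
      · intro he
        have hko : ¬ Even k := by
          rcases Nat.even_or_odd k with h' | h'
          · exfalso; exact (Nat.even_add_one.mp he) h'
          · exact Nat.not_even_iff_odd.mpr h'
        exact fin2 _ _ _ hk (Ne.symm (ih.2 hko))
      · intro he
        have hke : Even k := by
          rcases Nat.even_or_odd k with h' | h'
          · exact h'
          · exfalso; exact he (Nat.even_add_one.mpr (Nat.not_even_iff_odd.mpr h'))
        rw [ih.1 hke] at hk
        exact hk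
  have hVm : ∀ j, j % m = 0 → V j = V 0 := by
    intro j hj
    apply Fin.ext
    show j % m = 0 % m
    simp [hj]
  have hmeven : Even m := by
    by_contra hodd
    exact (main m).2 hodd (by rw [hVm (2*m) (Nat.mul_mod_left 2 m)])
  obtain ⟨n, hn⟩ := hmeven
  have hneven : Even n := by
    by_contra hodd
    exact (main n).2 hodd (by rw [hVm (2*n) (by rw [show 2*n = m by omega]; exact Nat.mod_self m)])
  obtain ⟨p, hp⟩ := hneven
  exact ⟨p, by omega⟩
end

section
/- Every oriented cycle on 4k vertices, k ≥ 1, that has an alternating matching admits an iot-injective homomorphism to the reflexive tournament T_2^r. -/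
/-- Auxiliary colouring: period-4 pattern `[0,1,1,0]` (or its flip, according to `b`),
anchored at vertex `t0`, on the cycle of length `m`. -/
def Fcol (m t0 : ℕ) (b : Bool) (v : ℕ) : Fin 2 :=
  if (((v + m - t0) % 4 = 1 ∨ (v + m - t0) % 4 = 2) ↔ b = true) then 1 else 0

lemma Fcol_pos {m t0 : ℕ} {b : Bool} {v : ℕ}
    (h : (v + m - t0) % 4 = 1 ∨ (v + m - t0) % 4 = 2) :
    Fcol m t0 b v = if b = true then 1 else 0 := by
  unfold Fcol
  rcases Bool.eq_false_or_eq_true b with hb | hb <;> simp [h, hb]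

lemma Fcol_neg {m t0 : ℕ} {b : Bool} {v : ℕ}
    (h : ¬((v + m - t0) % 4 = 1 ∨ (v + m - t0) % 4 = 2)) :
    Fcol m t0 b v = if b = true then 0 else 1 := by
  unfold Fcol
  rcases Bool.eq_false_or_eq_true b with hb | hb <;> simp [h, hb]

/-- every oriented cycle on `4k` vertices (`k ≥ 1`) that has an
alternating matching admits an iot-injective homomorphism to `T_2^r`. -/
theorem stmt18 (k : ℕ) (hk : 1 ≤ k) (σ : ℕ → Bool) (μ : ℕ → Prop)
    (hμ : CycAltMatching (4 * k) σ μ) :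
    IotHomEx (OCycRel (4 * k) σ) T2r := by
  obtain ⟨h1, h2, h3, h4⟩ := hμ
  set m := 4 * k with hm
  have hm4 : 4 ≤ m := by omega
  -- find a matching edge
  obtain ⟨t0, ht0m, ht0μ⟩ : ∃ t0, t0 < m ∧ μ t0 := by
    rcases h3 0 (by omega) with h | h
    · exact ⟨0, by omega, h⟩
    · exact ⟨(0 + m - 1) % m, Nat.mod_lt _ (by omega), h⟩
  -- stepping lemma: the matching and alternation propagate two steps around
  have step : ∀ t, t < m → μ t → μ ((t + 2) % m) ∧ σ ((t + 2) % m) = !(σ t) := by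
    intro t ht hμt
    have hnot1 : ¬ μ ((t + 1) % m) := fun h => h2 t ht ⟨hμt, h⟩
    have hv : (t + 2) % m < m := Nat.mod_lt _ (by omega)
    have key : ((t + 2) % m + m - 1) % m = (t + 1) % m := by
      have e1 : (t + 2) % m + m - 1 = (t + 2) % m + (m - 1) := by omega
      rw [e1, Nat.mod_add_mod]
      have e2 : t + 2 + (m - 1) = t + 1 + m := by omega
      rw [e2, Nat.add_mod_right]
    have hμ2 : μ ((t + 2) % m) := by
      rcases h3 ((t + 2) % m) hv with h | h
      · exact h
      · rw [key] at h; exact absurd h hnot1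
    refine ⟨hμ2, ?_⟩
    have hne := h4 t 2 ht (by omega) (by omega) hμt hμ2 (by
      intro s hs1 hs2
      have hs : s = 1 := by omega
      rw [hs]; exact hnot1)
    revert hne
    cases hA : σ t <;> cases hB : σ ((t + 2) % m) <;> decide
  -- alternation along the parity class of t0
  have L : ∀ j, μ ((t0 + 2 * j) % m) ∧
      σ ((t0 + 2 * j) % m) = (if j % 2 = 0 then σ t0 else !(σ t0)) := by
    intro j
    induction j with
    | zero =>
      constructor
      · simpa [Nat.mod_eq_of_lt ht0m] using ht0μ
      · simp [Nat.mod_eq_of_lt ht0m]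
    | succ j ih =>
      have he : t0 + 2 * (j + 1) = (t0 + 2 * j) + 2 := by ring
      have hlt : (t0 + 2 * j) % m < m := Nat.mod_lt _ (by omega)
      have hmod : (t0 + 2 * (j + 1)) % m = ((t0 + 2 * j) % m + 2) % m := by
        rw [he, Nat.add_mod (t0 + 2 * j) 2 m, Nat.mod_eq_of_lt (show 2 < m by omega)]
      obtain ⟨hμj, hσj⟩ := ih
      obtain ⟨hμ', hσ'⟩ := step _ hlt hμj
      rw [hmod]
      refine ⟨hμ', ?_⟩
      rw [hσ', hσj]
      by_cases hj : j % 2 = 0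
      · have hj1 : (j + 1) % 2 = 1 := by omega
        simp [hj, hj1]
      · have hj0 : (j + 1) % 2 = 0 := by omega
        simp [hj, hj0]
  -- σ in terms of the residue mod 4 relative to t0
  have sigma_res : ∀ t, t < m →
      (((t + m - t0) % 4 = 0 → σ t = σ t0) ∧ ((t + m - t0) % 4 = 2 → σ t = !(σ t0))) := by
    intro t ht
    constructor
    · intro hr
      set j := (t + m - t0) / 2 with hjdef
      have hj2 : t0 + 2 * j = t + m := by omega
      have heq : (t0 + 2 * j) % m = t := by
        rw [hj2, Nat.add_mod_right, Nat.mod_eq_of_lt ht]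
      have hL := (L j).2
      rw [heq] at hL
      have hje : j % 2 = 0 := by omega
      simpa [hje] using hL
    · intro hr
      set j := (t + m - t0) / 2 with hjdef
      have hj2 : t0 + 2 * j = t + m := by omega
      have heq : (t0 + 2 * j) % m = t := by
        rw [hj2, Nat.add_mod_right, Nat.mod_eq_of_lt ht]
      have hL := (L j).2
      rw [heq] at hL
      have hje : j % 2 = 1 := by omega
      simpa [hje] using hL
  -- small modular arithmetic helpers
  have shift1 : ∀ t, t < m → ((t + 1) % m + m - t0) % 4 = (t + 1 + m - t0) % 4 := by
    intro t ht
    rcases Nat.lt_or_ge (t + 1) m with h | h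
    · rw [Nat.mod_eq_of_lt h]
    · have he : t + 1 = m := by omega
      rw [he, Nat.mod_self]
      omega
  have shiftC : ∀ v, v < m → ((v + m - 1) % m + m - t0) % 4 = (v + m - 1 + m - t0) % 4 := by
    intro v hv
    rcases Nat.eq_zero_or_pos v with h | h
    · subst h
      rw [Nat.mod_eq_of_lt (show 0 + m - 1 < m by omega)]
    · have he : v + m - 1 = (v - 1) + m := by omega
      rw [he, Nat.add_mod_right, Nat.mod_eq_of_lt (show v - 1 < m by omega)]
      omega
  have helper1 : ∀ a, a < m → ((a + 1) % m + m - 1) % m = a := by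
    intro a ha
    rcases Nat.lt_or_ge (a + 1) m with h | h
    · rw [Nat.mod_eq_of_lt h]
      have e1 : a + 1 + m - 1 = a + m := by omega
      rw [e1, Nat.add_mod_right, Nat.mod_eq_of_lt ha]
    · have h1 : a + 1 = m := by omega
      rw [h1, Nat.mod_self]
      have e1 : 0 + m - 1 = a := by omega
      rw [e1, Nat.mod_eq_of_lt ha]
  -- the colouring respects every edge
  have hom_edge : ∀ t, t < m →
      (σ t = true → Fcol m t0 (σ t0) t ≤ Fcol m t0 (σ t0) ((t + 1) % m)) ∧
      (σ t = false → Fcol m t0 (σ t0) ((t + 1) % m) ≤ Fcol m t0 (σ t0) t) := by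
    intro t ht
    have hs := shift1 t ht
    have h0 := (sigma_res t ht).1
    have h2' := (sigma_res t ht).2
    have h4' : (t + m - t0) % 4 = 0 ∨ (t + m - t0) % 4 = 1 ∨
        (t + m - t0) % 4 = 2 ∨ (t + m - t0) % 4 = 3 := by omega
    rcases h4' with h | h | h | h
    · have hσ := h0 h
      have hFt : Fcol m t0 (σ t0) t = if σ t0 = true then 0 else 1 := Fcol_neg (by omega)
      have hFn : Fcol m t0 (σ t0) ((t + 1) % m) = if σ t0 = true then 1 else 0 :=
        Fcol_pos (by rw [hs]; omega)
      refine ⟨fun hT => ?_, fun hT => ?_⟩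
      · have hbb : σ t0 = true := by rw [← hσ]; exact hT
        rw [hFt, hFn, hbb]; decide
      · have hbb : σ t0 = false := by rw [← hσ]; exact hT
        rw [hFt, hFn, hbb]; decide
    · have hFt : Fcol m t0 (σ t0) t = if σ t0 = true then 1 else 0 := Fcol_pos (Or.inl h)
      have hFn : Fcol m t0 (σ t0) ((t + 1) % m) = if σ t0 = true then 1 else 0 :=
        Fcol_pos (by rw [hs]; omega)
      rw [hFt, hFn]
      exact ⟨fun _ => le_refl _, fun _ => le_refl _⟩
    · have hσ := h2' h
      have hFt : Fcol m t0 (σ t0) t = if σ t0 = true then 1 else 0 := Fcol_pos (Or.inr h)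
      have hFn : Fcol m t0 (σ t0) ((t + 1) % m) = if σ t0 = true then 0 else 1 :=
        Fcol_neg (by rw [hs]; omega)
      refine ⟨fun hT => ?_, fun hT => ?_⟩
      · have hbb : σ t0 = false := by
          have h' := hσ; rw [hT] at h'; simpa using h'.symm
        rw [hFt, hFn, hbb]; decide
      · have hbb : σ t0 = true := by
          have h' := hσ; rw [hT] at h'; simpa using h'.symm
        rw [hFt, hFn, hbb]; decide
    · have hFt : Fcol m t0 (σ t0) t = if σ t0 = true then 0 else 1 := Fcol_neg (by omega)
      have hFn : Fcol m t0 (σ t0) ((t + 1) % m) = if σ t0 = true then 0 else 1 :=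
        Fcol_neg (by rw [hs]; omega)
      rw [hFt, hFn]
      exact ⟨fun _ => le_refl _, fun _ => le_refl _⟩
  -- the two neighbours of any vertex get different colours
  have hFne : ∀ v, v < m →
      Fcol m t0 (σ t0) ((v + 1) % m) ≠ Fcol m t0 (σ t0) ((v + m - 1) % m) := by
    intro v hv
    have hA := shift1 v hv
    have hC := shiftC v hv
    have hkey : (((v + 1) % m + m - t0) % 4 = 1 ∨ ((v + 1) % m + m - t0) % 4 = 2) ↔
        ¬(((v + m - 1) % m + m - t0) % 4 = 1 ∨ ((v + m - 1) % m + m - t0) % 4 = 2) := by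
      rw [hA, hC]; omega
    by_cases hp : ((v + 1) % m + m - t0) % 4 = 1 ∨ ((v + 1) % m + m - t0) % 4 = 2
    · rw [Fcol_pos hp, Fcol_neg (hkey.mp hp)]
      rcases Bool.eq_false_or_eq_true (σ t0) with hB | hB <;> rw [hB] <;> decide
    · rw [Fcol_neg hp, Fcol_pos (by by_contra hq; exact hp (hkey.mpr hq))]
      rcases Bool.eq_false_or_eq_true (σ t0) with hB | hB <;> rw [hB] <;> decide
  -- neighbour classification
  have nbr : ∀ x y : Fin m, OCycRel m σ x y →
      (y : ℕ) = ((x : ℕ) + 1) % m ∨ (x : ℕ) = ((y : ℕ) + 1) % m := by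
    intro x y hxy
    obtain ⟨t, ht, h⟩ := hxy
    rcases h with ⟨_, hx, hy⟩ | ⟨_, hx, hy⟩
    · left; rw [hx, hy]
    · right; rw [hx, hy]
  have mem_char : ∀ x y : Fin m, (OCycRel m σ y x ∨ OCycRel m σ x y) →
      (y : ℕ) = ((x : ℕ) + 1) % m ∨ (y : ℕ) = ((x : ℕ) + m - 1) % m := by
    intro x y h
    have halt : (y : ℕ) = ((x : ℕ) + 1) % m ∨ (x : ℕ) = ((y : ℕ) + 1) % m := by
      rcases h with h | h
      · rcases nbr y x h with h' | h'
        · exact Or.inr h'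
        · exact Or.inl h'
      · exact nbr x y h
    rcases halt with h' | h'
    · exact Or.inl h'
    · right
      rw [h', helper1 (y : ℕ) y.isLt]
  -- assemble
  refine ⟨fun v => Fcol m t0 (σ t0) v.val, ?_, ?_⟩
  · intro x y hxy
    obtain ⟨t, ht, h⟩ := hxy
    rcases h with ⟨hσt, hx, hy⟩ | ⟨hσt, hx, hy⟩
    · show Fcol m t0 (σ t0) x.val ≤ Fcol m t0 (σ t0) y.val
      rw [hx, hy]
      exact (hom_edge t ht).1 hσt
    · show Fcol m t0 (σ t0) x.val ≤ Fcol m t0 (σ t0) y.val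
      rw [hx, hy]
      exact (hom_edge t ht).2 hσt
  · intro x y1 hy1 y2 hy2 hf
    simp only [Set.mem_union, Set.mem_setOf_eq] at hy1 hy2
    have hf' : Fcol m t0 (σ t0) (y1 : ℕ) = Fcol m t0 (σ t0) (y2 : ℕ) := hf
    have c1 := mem_char x y1 hy1
    have c2 := mem_char x y2 hy2
    have hne := hFne (x : ℕ) x.isLt
    apply Fin.ext
    rcases c1 with e1 | e1 <;> rcases c2 with e2 | e2
    · rw [e1, e2]
    · rw [e1, e2] at hf'; exact absurd hf' hne
    · rw [e1, e2] at hf'; exact absurd hf'.symm hne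
    · rw [e1, e2]
end
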